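/- arXiv:1802.08429 — 8 statements merged into one kernel-verified Lean document; each statement's English description precedes it below -/
import Mathlib

section
/- For any N×N matrix L and any subset A of {1,…,N}, Σ_{B : A ⊆ B ⊆ {1,…,N}} det(L_B) = det(I^{Ā} + L), where L_B is the principal submatrix indexed by B, det(L_∅) = 1, and I^{Ā} is the diagonal matrix with 1 on the diagonal entries indexed by the complement of A and 0 elsewhere. -/
/-!
Expand `det (M + diagonal d)` by multilinearity in the rows: choosing the rows of `M` on `s` and
the rows `d i • eᵢ` off `s` contributes `(∏ i ∉ s, d i) * det M_s`. For `d` the indicator of `Aᶜ`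
the weight is `1` if `A ⊆ s` and `0` otherwise.
-/

/-- The principal submatrix of `K` indexed by a finite subset `A`. -/
noncomputable def subMat {N : ℕ} (K : Matrix (Fin N) (Fin N) ℝ) (A : Finset (Fin N)) :
    Matrix A A ℝ :=
  K.submatrix (fun i : A => (i : Fin N)) (fun j : A => (j : Fin N))

open Matrix in
theorem Matrix.det_add_diagonal {n R : Type*} [Fintype n] [DecidableEq n] [CommRing R]
    (M : Matrix n n R) (d : n → R) :
    det (M + diagonal d) =
      ∑ s : Finset n, (∏ i ∈ sᶜ, d i) * det (M.submatrix ((↑) : s → n) (↑)) := by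
  let D : (n → R) [⋀^n]→ₗ[R] R := detRowAlternating
  have hrows : M + diagonal d = of (M.row + fun i => d i • (1 : Matrix n n R).row i) := by
    ext i j
    simp [diagonal_apply, one_apply]
  have hpiece (s : Finset n) : s.piecewise M.row (fun i => d i • (1 : Matrix n n R).row i) =
      fun i => (if i ∈ s then 1 else d i) • s.piecewise M.row (1 : Matrix n n R).row i := by
    funext i
    by_cases hi : i ∈ s <;> simp [hi]
  have hweight (s : Finset n) : ∏ i, (if i ∈ s then 1 else d i) = ∏ i ∈ sᶜ, d i := by
    simp [Finset.prod_ite, Finset.filter_not, Finset.compl_eq_univ_sdiff]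
  rw [hrows]
  change D (M.row + fun i => d i • (1 : Matrix n n R).row i) = _
  rw [D.map_add_univ]
  refine Finset.sum_congr rfl fun s _ => ?_
  rw [hpiece, D.map_smul_univ, hweight, smul_eq_mul]
  exact congrArg _ (det_piecewise_one_eq_submatrix_det M s)

/-- For any `N × N` matrix `L` and any `A ⊆ {1,…,N}`,
`Σ_{B : A ⊆ B ⊆ {1,…,N}} det(L_B) = det(I^{Ā} + L)`, where `I^{Ā}` is the diagonal
matrix with ones exactly on the diagonal entries indexed by the complement of `A`. -/
theorem sum_subdet_supersets {N : ℕ} (L : Matrix (Fin N) (Fin N) ℝ) (A : Finset (Fin N)) :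
    ∑ B ∈ Finset.univ.filter (fun B => A ⊆ B), (subMat L B).det =
      (Matrix.diagonal (fun i => if i ∈ A then (0 : ℝ) else 1) + L).det := by
  have hweight (B : Finset (Fin N)) :
      ∏ i ∈ Bᶜ, (if i ∈ A then (0 : ℝ) else 1) = if A ⊆ B then 1 else 0 := by
    simp_rw [← ite_not (_ ∈ A), Finset.prod_boole]
    congr 1
    simp only [Finset.mem_compl, propext not_imp_not]
    rfl
  rw [add_comm, Matrix.det_add_diagonal, Finset.sum_filter]
  refine Finset.sum_congr rfl fun B _ => ?_
  rw [hweight, ite_mul, one_mul, zero_mul]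
  rfl
end

section
/- Let Y be a DPP on {1,…,N} with kernel K, and let A, B be disjoint subsets such that det((I−K)_B) ≠ 0. Then ℙ(A ⊆ Y, B ∩ Y = ∅) = det((I−K)_B) · det(H^B_A), where H^B = K + K_{·×B}((I−K)_B)^{-1} K_{B×·}. -/
/-- The matrix `H^B = K + K_{·×B} ((I−K)_B)⁻¹ K_{B×·}`. -/
noncomputable def HB {N : ℕ} (K : Matrix (Fin N) (Fin N) ℝ) (B : Finset (Fin N)) :
    Matrix (Fin N) (Fin N) ℝ :=
  K + (K.submatrix id (fun j : B => (j : Fin N))) *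
        (subMat ((1 : Matrix (Fin N) (Fin N) ℝ) - K) B)⁻¹ *
        (K.submatrix (fun i : B => (i : Fin N)) id)

/-- `ℙ(A ⊆ Y, B ∩ Y = ∅)` for a point process with distribution `P`. -/
noncomputable def jointProb {N : ℕ} (P : Finset (Fin N) → ℝ) (A B : Finset (Fin N)) : ℝ :=
  ∑ C ∈ Finset.univ.filter (fun C => A ⊆ C ∧ Disjoint B C), P C

/-!
Inclusion–exclusion over `B` gives `ℙ(A ⊆ Y, B ∩ Y = ∅) = ∑_{T ⊆ B} (-1)^|T| det K_{A∪T}`.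
Expanding `det (diag e + diag c · K)` row by row writes it as `∑_S ∏_{Sᶜ} e · ∏_S c · det K_S`;
with `e = 1_{Aᶜ}` and `c = 1_A − 1_B` only the sets `S = A ∪ T`, `T ⊆ B`, survive, so the
alternating sum is the determinant of the block matrix `[[K_A, K_{A×B}], [−K_{B×A}, (I−K)_B]]`.
Its Schur complement with respect to the block `(I−K)_B` is `H^B_A`.
-/

open Finset

namespace Finset

variable {α R : Type*} [Fintype α] [DecidableEq α] [CommRing R]

theorem sum_superset_disjoint_eq_sum_powerset (f : Finset α → R) (A B : Finset α) :
    ∑ C ∈ univ.filter (fun C => A ⊆ C ∧ Disjoint B C), f C =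
      ∑ T ∈ B.powerset, (-1) ^ #T * ∑ C ∈ univ.filter (fun C => A ∪ T ⊆ C), f C := by
  let S : α → Finset (Finset α) := fun i => univ.filter (i ∈ ·)
  have hinf : ∀ T : Finset α, T.inf S = univ.filter (T ⊆ ·) := by
    intro T
    induction T using Finset.induction_on with
    | empty => simp
    | insert a T ha ih => rw [inf_insert, ih]; ext C; simp [S, insert_subset_iff]
  have hinf_compl : ∀ T : Finset α, T.inf (fun i => (S i)ᶜ) = univ.filter (Disjoint T ·) := by
    intro T
    induction T using Finset.induction_on with
    | empty => simp
    | insert a T ha ih => rw [inf_insert, ih]; ext C; simp [S]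
  have hie := inclusion_exclusion_sum_inf_compl B S (fun C => if A ⊆ C then f C else 0)
  simp only [hinf_compl, hinf, sum_ite, sum_const_zero, add_zero, filter_filter,
    zsmul_eq_mul] at hie
  rw [filter_congr fun C _ => and_comm, hie]
  push_cast
  simp_rw [union_subset_iff, and_comm]

theorem sum_prod_compl_mul_prod_eq_sum_powerset {A B : Finset α} (hAB : Disjoint A B)
    (F : Finset α → R) :
    ∑ S : Finset α, (∏ i ∈ Sᶜ, if i ∈ A then 0 else 1) *
        (∏ i ∈ S, if i ∈ A then 1 else if i ∈ B then -1 else 0) * F S =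
      ∑ T ∈ B.powerset, (-1 : R) ^ #T * F (A ∪ T) := by
  set e : α → R := fun i => if i ∈ A then 0 else 1
  set c : α → R := fun i => if i ∈ A then 1 else if i ∈ B then -1 else 0
  have hweight_union : ∀ T ∈ B.powerset, (∏ i ∈ (A ∪ T)ᶜ, e i) * ∏ i ∈ A ∪ T, c i = (-1) ^ #T := by
    intro T hT
    have hTA : Disjoint A T := hAB.mono_right (mem_powerset.mp hT)
    have hc : ∀ i ∈ T, c i = -1 := fun i hi =>
      (if_neg (disjoint_right.mp hTA hi)).trans (if_pos (mem_powerset.mp hT hi))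
    rw [prod_union hTA, prod_eq_one fun i hi => if_neg (by simp_all),
      prod_eq_one fun i hi => if_pos hi, prod_congr rfl hc, prod_const, one_mul, one_mul]
  have hweight_zero : ∀ S ∉ B.powerset.image (A ∪ ·), (∏ i ∈ Sᶜ, e i) * ∏ i ∈ S, c i = 0 := by
    intro S hS
    by_cases hAS : A ⊆ S
    · have : ¬ S ⊆ A ∪ B := fun h => hS (mem_image.mpr ⟨S \ A, by simpa using h, by simpa⟩)
      obtain ⟨i, hiS, hi⟩ := not_subset.mp this
      rw [prod_eq_zero (f := c) hiS (by simp_all [c]), mul_zero]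
    · obtain ⟨a, haA, haS⟩ := not_subset.mp hAS
      rw [prod_eq_zero (f := e) (mem_compl.mpr haS) (if_pos haA), zero_mul]
  symm
  calc ∑ T ∈ B.powerset, (-1 : R) ^ #T * F (A ∪ T)
      = ∑ T ∈ B.powerset, (∏ i ∈ (A ∪ T)ᶜ, e i) * (∏ i ∈ A ∪ T, c i) * F (A ∪ T) :=
        sum_congr rfl fun T hT => by rw [hweight_union T hT]
    _ = ∑ S ∈ B.powerset.image (A ∪ ·), (∏ i ∈ Sᶜ, e i) * (∏ i ∈ S, c i) * F S := by
        rw [sum_image fun T hT T' hT' h => by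
          rw [← union_sdiff_cancel_left (hAB.mono_right (mem_powerset.mp hT)),
            ← union_sdiff_cancel_left (hAB.mono_right (mem_powerset.mp hT')), h]]
    _ = ∑ S, (∏ i ∈ Sᶜ, e i) * (∏ i ∈ S, c i) * F S :=
        sum_subset (subset_univ _) fun S _ hS => by rw [hweight_zero S hS, zero_mul]

end Finset

namespace Matrix

variable {n R : Type*} [DecidableEq n] [CommRing R]

theorem det_diagonal_add_diagonal_mul [Fintype n] (e c : n → R) (M : Matrix n n R) :
    det (diagonal e + diagonal c * M) =
      ∑ S : Finset n, (∏ i ∈ Sᶜ, e i) * (∏ i ∈ S, c i) *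
        (M.submatrix ((↑) : S → n) (↑)).det := by
  have hrows : ∀ S : Finset n, S.piecewise (diagonal c * M).row (diagonal e).row =
      diagonal (S.piecewise c e) * of (S.piecewise M.row (1 : Matrix n n R).row) := by
    intro S
    ext i j
    by_cases hi : i ∈ S <;> simp [piecewise, hi, row, diagonal_mul, diagonal_apply, one_apply]
  change detRowAlternating (diagonal e + diagonal c * M).row = _
  rw [add_comm, show (diagonal c * M + diagonal e).row = (diagonal c * M).row + (diagonal e).row
    from rfl, AlternatingMap.map_add_univ]
  refine sum_congr rfl fun S _ => ?_
  rw [hrows, ← det, det_mul, det_diagonal, det_piecewise_one_eq_submatrix_det, prod_piecewise,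
    univ_inter, ← compl_eq_univ_sdiff, mul_comm (∏ i ∈ S, c i)]

theorem det_submatrix_eq_of_row_eq_one [Fintype n] (X : Matrix n n R) (U : Finset n)
    (h : ∀ i ∉ U, X i = (1 : Matrix n n R) i) :
    (X.submatrix ((↑) : U → n) (↑)).det = X.det := by
  rw [← det_piecewise_one_eq_submatrix_det]
  congr
  ext i j
  by_cases hi : i ∈ U
  · simp [piecewise, hi, row]
  · simp [piecewise, hi, row, h]

theorem det_fromBlocks_submatrix_eq_det_submatrix_union (X : Matrix n n R) {A B : Finset n}
    (hAB : Disjoint A B) :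
    (fromBlocks (X.submatrix ((↑) : A → n) (↑)) (X.submatrix ((↑) : A → n) ((↑) : B → n))
      (X.submatrix ((↑) : B → n) ((↑) : A → n)) (X.submatrix ((↑) : B → n) (↑))).det =
      (X.submatrix ((↑) : ↥(A ∪ B) → n) (↑)).det := by
  rw [← det_submatrix_equiv_self (Equiv.Finset.union A B hAB), submatrix_submatrix]
  congr
  ext (i | i) (j | j) <;> rfl

theorem det_fromBlocks_one_sub_eq_sum_powerset [Fintype n] (M : Matrix n n R) {A B : Finset n}
    (hAB : Disjoint A B) :
    (fromBlocks (M.submatrix ((↑) : A → n) (↑)) (M.submatrix ((↑) : A → n) ((↑) : B → n))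
      (-M.submatrix ((↑) : B → n) ((↑) : A → n)) ((1 - M).submatrix ((↑) : B → n) (↑))).det =
      ∑ T ∈ B.powerset, (-1) ^ #T * (M.submatrix ((↑) : ↥(A ∪ T) → n) (↑)).det := by
  set X := diagonal (fun i => if i ∈ A then 0 else 1) +
    diagonal (fun i => if i ∈ A then 1 else if i ∈ B then -1 else 0) * M
  have hblocks : fromBlocks (M.submatrix ((↑) : A → n) (↑))
      (M.submatrix ((↑) : A → n) ((↑) : B → n)) (-M.submatrix ((↑) : B → n) ((↑) : A → n))
      ((1 - M).submatrix ((↑) : B → n) (↑)) =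
      fromBlocks (X.submatrix ((↑) : A → n) (↑)) (X.submatrix ((↑) : A → n) ((↑) : B → n))
        (X.submatrix ((↑) : B → n) ((↑) : A → n)) (X.submatrix ((↑) : B → n) (↑)) := by
    ext (i | i) (j | j)
    · simp [X, diagonal_apply, diagonal_mul, i.2]
    · simp [X, diagonal_apply, diagonal_mul, i.2]
    · have hij : (i : n) ≠ j := fun h => disjoint_left.mp hAB j.2 (h ▸ i.2)
      simp [X, diagonal_mul, disjoint_right.mp hAB i.2, i.2, hij]
    · simp [X, diagonal_apply, diagonal_mul, disjoint_right.mp hAB i.2, i.2, one_apply,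
        sub_eq_add_neg]
  have hrows : ∀ i ∉ A ∪ B, X i = (1 : Matrix n n R) i := by
    intro i hi
    rw [mem_union, not_or] at hi
    ext j
    rcases eq_or_ne i j with rfl | hij
    · simp [X, diagonal_mul, hi.1, hi.2]
    · simp [X, diagonal_mul, hi.1, hi.2, hij]
  rw [hblocks, det_fromBlocks_submatrix_eq_det_submatrix_union X hAB,
    det_submatrix_eq_of_row_eq_one X _ hrows, det_diagonal_add_diagonal_mul,
    sum_prod_compl_mul_prod_eq_sum_powerset hAB]

end Matrix

open Matrix

theorem subMat_HB {N : ℕ} (K : Matrix (Fin N) (Fin N) ℝ) (A B : Finset (Fin N)) :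
    subMat (HB K B) A = subMat K A + K.submatrix ((↑) : A → Fin N) ((↑) : B → Fin N) *
      (subMat (1 - K) B)⁻¹ * K.submatrix ((↑) : B → Fin N) ((↑) : A → Fin N) := by
  ext i j
  simp [HB, subMat, mul_apply]

theorem det_fromBlocks_one_sub_eq_det_mul_det_HB {N : ℕ} (K : Matrix (Fin N) (Fin N) ℝ)
    (A B : Finset (Fin N)) (hdet : (subMat (1 - K) B).det ≠ 0) :
    (fromBlocks (subMat K A) (K.submatrix ((↑) : A → Fin N) ((↑) : B → Fin N))
      (-K.submatrix ((↑) : B → Fin N) ((↑) : A → Fin N)) (subMat (1 - K) B)).det =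
      (subMat (1 - K) B).det * (subMat (HB K B) A).det := by
  let := (subMat (1 - K) B).invertibleOfIsUnitDet hdet.isUnit
  rw [det_fromBlocks₂₂, invOf_eq_nonsing_inv, Matrix.mul_neg, sub_neg_eq_add, subMat_HB]

theorem dpp_general_marginal_general {N : ℕ} (K : Matrix (Fin N) (Fin N) ℝ)
    (P : Finset (Fin N) → ℝ)
    (hP : ∀ A : Finset (Fin N),
      ∑ B ∈ Finset.univ.filter (fun B => A ⊆ B), P B = (subMat K A).det)
    (A B : Finset (Fin N)) (hAB : Disjoint A B)
    (hdet : (subMat ((1 : Matrix (Fin N) (Fin N) ℝ) - K) B).det ≠ 0) :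
    jointProb P A B =
      (subMat ((1 : Matrix (Fin N) (Fin N) ℝ) - K) B).det * (subMat (HB K B) A).det := by
  calc jointProb P A B = ∑ T ∈ B.powerset, (-1) ^ #T * (subMat K (A ∪ T)).det := by
        simp only [jointProb, sum_superset_disjoint_eq_sum_powerset, hP]
    _ = _ := (det_fromBlocks_one_sub_eq_sum_powerset K hAB).symm
    _ = _ := det_fromBlocks_one_sub_eq_det_mul_det_HB K A B hdet

/-- General marginal of a DPP: if `A, B` are disjoint and `det((I−K)_B) ≠ 0`, then
`ℙ(A ⊆ Y, B ∩ Y = ∅) = det((I−K)_B) · det(H^B_A)`. -/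
theorem dpp_general_marginal {N : ℕ} (K : Matrix (Fin N) (Fin N) ℝ)
    (hK : K.PosSemidef) (hIK : ((1 : Matrix (Fin N) (Fin N) ℝ) - K).PosSemidef)
    (P : Finset (Fin N) → ℝ)
    (hP : ∀ A : Finset (Fin N),
      ∑ B ∈ Finset.univ.filter (fun B => A ⊆ B), P B = (subMat K A).det)
    (A B : Finset (Fin N)) (hAB : Disjoint A B)
    (hdet : (subMat ((1 : Matrix (Fin N) (Fin N) ℝ) - K) B).det ≠ 0) :
    jointProb P A B =
      (subMat ((1 : Matrix (Fin N) (Fin N) ℝ) - K) B).det * (subMat (HB K B) A).det :=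
  dpp_general_marginal_general K P hP A B hAB hdet
end

section
/- Let Y be a DPP with kernel K, let A, B ⊆ {1,…,N} be disjoint with ℙ(A ⊆ Y, B ∩ Y = ∅) ≠ 0, and let k ∉ A ∪ B. Then ℙ(k ∈ Y | A ⊆ Y, B ∩ Y = ∅) = det(H^B_{A∪{k}}) / det(H^B_A) = H^B(k,k) − H^B_{{k}×A} (H^B_A)^{-1} H^B_{A×{k}}. -/
/-- The quadratic form `M_{{k}×A} (M_A)⁻¹ M_{A×{k}}` (zero when `A = ∅`). -/
noncomputable def quadForm {N : ℕ} (M : Matrix (Fin N) (Fin N) ℝ) (A : Finset (Fin N))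
    (k : Fin N) : ℝ :=
  ∑ i : A, ∑ j : A, M k (i : Fin N) * (subMat M A)⁻¹ i j * M (j : Fin N) k

open Matrix Finset

section Aux

variable {N : ℕ}

/-- Equiv between a disjoint union of finsets and the sum of their coercions. -/
def finsetUnionEquiv {α : Type*} [DecidableEq α] {A B : Finset α} (h : Disjoint A B) :
    (↥A ⊕ ↥B) ≃ ↥(A ∪ B) where
  toFun := Sum.elim (fun a => ⟨a, Finset.mem_union_left _ a.2⟩)
    (fun b => ⟨b, Finset.mem_union_right _ b.2⟩)
  invFun x := if hx : (x : α) ∈ A then Sum.inl ⟨x, hx⟩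
    else Sum.inr ⟨x, (Finset.mem_union.1 x.2).resolve_left hx⟩
  left_inv := by
    rintro (a | b)
    · simp
    · have : (b : α) ∉ A := fun hb => (Finset.disjoint_left.1 h hb) b.2
      simp [this]
  right_inv := by
    intro x
    by_cases hx : (x : α) ∈ A <;> simp [hx]

/-- Equiv between `↥A ⊕ Unit` and `↥(insert k A)` when `k ∉ A`. -/
def finsetInsertEquiv {α : Type*} [DecidableEq α] {A : Finset α} {k : α} (h : k ∉ A) :
    (↥A ⊕ Unit) ≃ ↥(insert k A) where
  toFun := Sum.elim (fun a => ⟨a, Finset.mem_insert_of_mem a.2⟩)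
    (fun _ => ⟨k, Finset.mem_insert_self _ _⟩)
  invFun x := if hx : (x : α) ∈ A then Sum.inl ⟨x, hx⟩ else Sum.inr ()
  left_inv := by
    rintro (a | u)
    · simp
    · simp [h]
  right_inv := by
    intro x
    by_cases hx : (x : α) ∈ A
    · simp [hx]
    · have hxk : (x : α) = k := by
        rcases Finset.mem_insert.1 x.2 with h1 | h1
        · exact h1
        · exact absurd h1 hx
      simp only [hx, dif_neg, not_false_iff]
      exact Subtype.ext hxk.symm

lemma det_subMat_congr (M : Matrix (Fin N) (Fin N) ℝ) {S T : Finset (Fin N)} (h : S = T) :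
    (subMat M S).det = (subMat M T).det := by subst h; rfl

/-- The matrix with columns in `B` replaced by `e_j - K_j`. -/
noncomputable def Lmat (K : Matrix (Fin N) (Fin N) ℝ) (B : Finset (Fin N)) :
    Matrix (Fin N) (Fin N) ℝ :=
  Matrix.of fun i j => if j ∈ B then (if i = j then (1 : ℝ) else 0) - K i j else K i j

/-- Deleting a column: determinant with a standard basis column. -/
lemma det_updateColumn_single (M : Matrix (Fin N) (Fin N) ℝ) (T : Finset (Fin N)) (b : Fin N)
    (hb : b ∈ T) :
    ((subMat M T).updateCol ⟨b, hb⟩ (fun i => if (i : Fin N) = b then (1:ℝ) else 0)).det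
      = (subMat M (T.erase b)).det := by
  have hbe : b ∉ T.erase b := Finset.notMem_erase b T
  have hT : insert b (T.erase b) = T := Finset.insert_erase hb
  let e0 : (↥(T.erase b) ⊕ Unit) ≃ ↥(insert b (T.erase b)) := finsetInsertEquiv hbe
  let e : (↥(T.erase b) ⊕ Unit) ≃ ↥T :=
    e0.trans (Equiv.subtypeEquivRight (fun x => by rw [hT]))
  have he : ∀ i : ↥(T.erase b), ((e (Sum.inl i) : Fin N)) = (i : Fin N) := fun i => rfl
  have heb : ((e (Sum.inr ()) : Fin N)) = b := rfl
  rw [← Matrix.det_submatrix_equiv_self e]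
  have hblock : ((subMat M T).updateCol ⟨b, hb⟩
        (fun i => if (i : Fin N) = b then (1:ℝ) else 0)).submatrix e e
      = Matrix.fromBlocks (subMat M (T.erase b)) 0
          (Matrix.of fun (_ : Unit) (j : ↥(T.erase b)) => M b (j : Fin N))
          (1 : Matrix Unit Unit ℝ) := by
    ext i j
    rcases i with i | i <;> rcases j with j | j
    · have hj : (e (Sum.inl j)) ≠ (⟨b, hb⟩ : ↥T) := by
        intro hcontra
        apply (Finset.mem_erase.1 j.2).1
        have := congrArg (Subtype.val) hcontra
        simpa [he] using this
      simp [Matrix.updateCol_apply, hj, subMat, he, Matrix.submatrix_apply]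
    · have hj : (e (Sum.inr j)) = (⟨b, hb⟩ : ↥T) := Subtype.ext heb
      have hi : (i : Fin N) ≠ b := (Finset.mem_erase.1 i.2).1
      simp [Matrix.updateCol_apply, hj, hi, he]
    · have hj : (e (Sum.inl j)) ≠ (⟨b, hb⟩ : ↥T) := by
        intro hcontra
        apply (Finset.mem_erase.1 j.2).1
        have := congrArg (Subtype.val) hcontra
        simpa [he] using this
      simp [Matrix.updateCol_apply, hj, subMat, he, heb, Matrix.submatrix_apply]
    · have hj : (e (Sum.inr j)) = (⟨b, hb⟩ : ↥T) := Subtype.ext heb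
      simp [Matrix.updateCol_apply, hj, heb, Matrix.one_apply]
  rw [hblock, Matrix.det_fromBlocks_zero₁₂, Matrix.det_one, mul_one]



lemma exp_lemma (K : Matrix (Fin N) (Fin N) ℝ) (B : Finset (Fin N)) :
    ∀ A : Finset (Fin N), Disjoint A B →
      ∑ S ∈ B.powerset, (-1:ℝ)^S.card * (subMat K (A ∪ S)).det
        = (subMat (Lmat K B) (A ∪ B)).det := by
  induction B using Finset.induction_on with
  | empty =>
    intro A _
    have : subMat (Lmat K ∅) (A ∪ ∅) = subMat K (A ∪ ∅) := by
      ext i j; simp [subMat, Lmat]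
    rw [this]
    simp
  | @insert b B' hbB' ih =>
    intro A hd
    have hbA : b ∉ A := fun hbA => (Finset.disjoint_left.1 hd hbA) (Finset.mem_insert_self _ _)
    have hAB' : Disjoint A B' :=
      hd.mono_right (Finset.subset_insert _ _)
    have hbAB' : b ∉ A ∪ B' := by simp [hbA, hbB']
    have hdi : Disjoint (insert b A) B' := by
      rw [Finset.disjoint_left]
      intro x hx hx'
      rcases Finset.mem_insert.1 hx with rfl | hx
      · exact hbB' hx'
      · exact (Finset.disjoint_left.1 hAB' hx) hx'
    -- LHS split
    rw [Finset.sum_powerset_insert hbB']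
    have hsecond : ∑ S ∈ B'.powerset, (-1:ℝ)^(insert b S).card * (subMat K (A ∪ insert b S)).det
        = -∑ S ∈ B'.powerset, (-1:ℝ)^S.card * (subMat K ((insert b A) ∪ S)).det := by
      rw [← Finset.sum_neg_distrib]
      refine Finset.sum_congr rfl fun S hS => ?_
      have hbS : b ∉ S := fun hbS => hbB' (Finset.mem_powerset.1 hS hbS)
      rw [Finset.card_insert_of_notMem hbS, pow_succ]
      have : A ∪ insert b S = insert b A ∪ S := by
        rw [Finset.union_insert, Finset.insert_union]
      rw [this]
      ring
    rw [hsecond, ih A hAB', ih (insert b A) hdi]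
    -- RHS
    have hT : A ∪ insert b B' = insert b (A ∪ B') := Finset.union_insert _ _ _
    set T : Finset (Fin N) := insert b (A ∪ B') with hTdef
    have hbT : b ∈ T := Finset.mem_insert_self _ _
    rw [det_subMat_congr (Lmat K (insert b B')) hT]
    have hupdate : subMat (Lmat K (insert b B')) T
        = (subMat (Lmat K B') T).updateCol ⟨b, hbT⟩
            (fun i => (if (i : Fin N) = b then (1:ℝ) else 0) - K (i : Fin N) b) := by
      ext i j
      by_cases hj : j = (⟨b, hbT⟩ : ↥T)
      · subst hj
        simp [subMat, Lmat, Matrix.updateCol_apply, Finset.mem_insert_self]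
      · have hjb : (j : Fin N) ≠ b := fun h => hj (Subtype.ext h)
        simp [subMat, Lmat, Matrix.updateCol_apply, hj, hjb, Finset.mem_insert, hjb]
    rw [hupdate]
    have hsub : (fun i : ↥T => (if (i : Fin N) = b then (1:ℝ) else 0) - K (i : Fin N) b)
        = (fun i : ↥T => if (i : Fin N) = b then (1:ℝ) else 0)
          + (-1 : ℝ) • (fun i : ↥T => K (i : Fin N) b) := by
      funext i; simp [sub_eq_add_neg]
    rw [hsub, Matrix.det_updateCol_add, Matrix.det_updateCol_smul,
      det_updateColumn_single (Lmat K B') T b hbT]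
    have hKcol : (subMat (Lmat K B') T).updateCol ⟨b, hbT⟩
        (fun i : ↥T => K (i : Fin N) b) = subMat (Lmat K B') T := by
      ext i j
      by_cases hj : j = (⟨b, hbT⟩ : ↥T)
      · subst hj
        simp [subMat, Lmat, Matrix.updateCol_apply, hbB']
      · simp [Matrix.updateCol_apply, hj]
    rw [hKcol]
    have herase : T.erase b = A ∪ B' := by
      rw [hTdef, Finset.erase_insert hbAB']
    rw [det_subMat_congr (Lmat K B') herase,
      det_subMat_congr (Lmat K B') (show T = insert b A ∪ B' by
        rw [hTdef, Finset.insert_union])]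
    ring

/-- Block determinant form: det of L-submatrix as `det D * det H_A`. -/
lemma det_Lmat_eq (K : Matrix (Fin N) (Fin N) ℝ) (A B : Finset (Fin N)) (h : Disjoint A B)
    (hD : IsUnit (subMat ((1 : Matrix (Fin N) (Fin N) ℝ) - K) B).det) :
    (subMat (Lmat K B) (A ∪ B)).det
      = (subMat ((1 : Matrix (Fin N) (Fin N) ℝ) - K) B).det * (subMat (HB K B) A).det := by
  let e : (↥A ⊕ ↥B) ≃ ↥(A ∪ B) := finsetUnionEquiv h
  rw [← Matrix.det_submatrix_equiv_self e]
  have hblock : (subMat (Lmat K B) (A ∪ B)).submatrix e e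
      = Matrix.fromBlocks (subMat K A)
          (Matrix.of fun (i : ↥A) (j : ↥B) => -K (i : Fin N) (j : Fin N))
          (Matrix.of fun (i : ↥B) (j : ↥A) => K (i : Fin N) (j : Fin N))
          (subMat ((1 : Matrix (Fin N) (Fin N) ℝ) - K) B) := by
    ext i j
    rcases i with i | i <;> rcases j with j | j
    · have hj : (j : Fin N) ∉ B := fun hj => (Finset.disjoint_left.1 h j.2) hj
      simp [subMat, Lmat, hj, e, finsetUnionEquiv]
    · have hij : (i : Fin N) ≠ (j : Fin N) := by
        intro hij
        exact (Finset.disjoint_left.1 h i.2) (hij ▸ j.2)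
      simp [subMat, Lmat, j.2, hij, e, finsetUnionEquiv]
    · have hj : (j : Fin N) ∉ B := fun hj => (Finset.disjoint_left.1 h j.2) hj
      simp [subMat, Lmat, hj, e, finsetUnionEquiv]
    · simp [subMat, Lmat, j.2, e, finsetUnionEquiv, Matrix.one_apply, Matrix.sub_apply]
  rw [hblock]
  haveI : Invertible (subMat ((1 : Matrix (Fin N) (Fin N) ℝ) - K) B) :=
    Matrix.invertibleOfIsUnitDet _ hD
  rw [Matrix.det_fromBlocks₂₂, Matrix.invOf_eq_nonsing_inv]
  congr 1
  have hmat : subMat K A -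
        (Matrix.of fun (i : ↥A) (j : ↥B) => -K (i : Fin N) (j : Fin N)) *
          (subMat ((1 : Matrix (Fin N) (Fin N) ℝ) - K) B)⁻¹ *
          (Matrix.of fun (i : ↥B) (j : ↥A) => K (i : Fin N) (j : Fin N))
      = subMat (HB K B) A := by
    ext i j
    simp only [Matrix.sub_apply, Matrix.mul_apply, subMat, HB, Matrix.add_apply,
      Matrix.submatrix_apply, Matrix.of_apply, id_eq, neg_mul, Finset.sum_neg_distrib]
    ring_nf
  rw [hmat]

/-- Schur-complement expansion of the determinant at one added point. -/
lemma det_insert_point (M : Matrix (Fin N) (Fin N) ℝ) (A : Finset (Fin N)) (k : Fin N)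
    (hk : k ∉ A) (hA : IsUnit (subMat M A).det) :
    (subMat M (insert k A)).det = (subMat M A).det * (M k k - quadForm M A k) := by
  let e : (↥A ⊕ Unit) ≃ ↥(insert k A) := finsetInsertEquiv hk
  rw [← Matrix.det_submatrix_equiv_self e]
  have hblock : (subMat M (insert k A)).submatrix e e
      = Matrix.fromBlocks (subMat M A)
          (Matrix.of fun (i : ↥A) (_ : Unit) => M (i : Fin N) k)
          (Matrix.of fun (_ : Unit) (j : ↥A) => M k (j : Fin N))
          (Matrix.of fun (_ : Unit) (_ : Unit) => M k k) := by
    ext i j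
    rcases i with i | i <;> rcases j with j | j <;>
      simp [subMat, e, finsetInsertEquiv]
  rw [hblock]
  haveI : Invertible (subMat M A) := Matrix.invertibleOfIsUnitDet _ hA
  rw [Matrix.det_fromBlocks₁₁, Matrix.invOf_eq_nonsing_inv]
  congr 1
  rw [Matrix.det_unique]
  simp only [Matrix.sub_apply, Matrix.mul_apply, Matrix.of_apply, quadForm, Finset.sum_mul]
  congr 1
  rw [Finset.sum_comm]

lemma sum_neg_one_pow (T : Finset (Fin N)) :
    ∑ S ∈ T.powerset, (-1 : ℝ)^S.card = if T = ∅ then 1 else 0 := by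
  have h := Finset.sum_powerset_neg_one_pow_card (x := T)
  have h2 : ((∑ S ∈ T.powerset, (-1 : ℤ)^S.card : ℤ) : ℝ)
      = ∑ S ∈ T.powerset, (-1 : ℝ)^S.card := by
    push_cast
    rfl
  rw [← h2, h]
  split <;> norm_num

lemma ie_lemma (P : Finset (Fin N) → ℝ) (K : Matrix (Fin N) (Fin N) ℝ)
    (hP : ∀ A : Finset (Fin N),
      ∑ B ∈ Finset.univ.filter (fun B => A ⊆ B), P B = (subMat K A).det)
    (A B : Finset (Fin N)) :
    jointProb P A B = ∑ S ∈ B.powerset, (-1:ℝ)^S.card * (subMat K (A ∪ S)).det := by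
  have key : ∀ C : Finset (Fin N),
      (∑ S ∈ B.powerset, if A ∪ S ⊆ C then ((-1:ℝ)^S.card) else 0)
        = if A ⊆ C ∧ Disjoint B C then 1 else 0 := by
    intro C
    by_cases hA : A ⊆ C
    · have hcond : ∀ S : Finset (Fin N), (A ∪ S ⊆ C) = (S ⊆ C) := by
        intro S
        simp [Finset.union_subset_iff, hA]
      simp only [hcond]
      have hps : B.powerset.filter (fun S => S ⊆ C) = (B ∩ C).powerset := by
        ext S
        simp only [Finset.mem_filter, Finset.mem_powerset, Finset.subset_inter_iff]
      rw [← Finset.sum_filter, hps, sum_neg_one_pow]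
      have : (B ∩ C = ∅) ↔ Disjoint B C := by
        rw [← Finset.disjoint_iff_inter_eq_empty]
      simp [this, hA]
    · have : ∀ S ∈ B.powerset, (if A ∪ S ⊆ C then ((-1:ℝ)^S.card) else 0) = 0 := by
        intro S _
        have : ¬ (A ∪ S ⊆ C) := fun h => hA (Finset.union_subset_iff.1 h).1
        simp [this]
      rw [Finset.sum_congr rfl this]
      simp [hA]
  calc jointProb P A B
      = ∑ C ∈ Finset.univ, (if A ⊆ C ∧ Disjoint B C then 1 else 0) * P C := by
        rw [jointProb, Finset.sum_filter]
        refine Finset.sum_congr rfl fun C _ => ?_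
        split <;> simp
    _ = ∑ C ∈ Finset.univ,
          (∑ S ∈ B.powerset, if A ∪ S ⊆ C then ((-1:ℝ)^S.card) else 0) * P C := by
        refine Finset.sum_congr rfl fun C _ => ?_
        rw [key C]
    _ = ∑ C ∈ Finset.univ, ∑ S ∈ B.powerset,
          (if A ∪ S ⊆ C then ((-1:ℝ)^S.card * P C) else 0) := by
        refine Finset.sum_congr rfl fun C _ => ?_
        rw [Finset.sum_mul]
        refine Finset.sum_congr rfl fun S _ => ?_
        rw [ite_mul, zero_mul]
    _ = ∑ S ∈ B.powerset, ∑ C ∈ Finset.univ,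
          (if A ∪ S ⊆ C then ((-1:ℝ)^S.card * P C) else 0) := Finset.sum_comm
    _ = ∑ S ∈ B.powerset, (-1:ℝ)^S.card * (subMat K (A ∪ S)).det := by
        refine Finset.sum_congr rfl fun S _ => ?_
        rw [← hP (A ∪ S), Finset.sum_filter, Finset.mul_sum]
        refine Finset.sum_congr rfl fun C _ => ?_
        split <;> simp

end Aux

/-- Pointwise conditional probabilities of a DPP: if `ℙ(A ⊆ Y, B ∩ Y = ∅) ≠ 0` and
`k ∉ A ∪ B`, then `ℙ(k ∈ Y | A ⊆ Y, B ∩ Y = ∅) = det(H^B_{A∪{k}}) / det(H^B_A)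
= H^B(k,k) − H^B_{{k}×A} (H^B_A)⁻¹ H^B_{A×{k}}`. -/
theorem dpp_pointwise_conditional {N : ℕ} (K : Matrix (Fin N) (Fin N) ℝ)
    (hK : K.PosSemidef) (hIK : ((1 : Matrix (Fin N) (Fin N) ℝ) - K).PosSemidef)
    (P : Finset (Fin N) → ℝ) (hPnn : ∀ C, 0 ≤ P C)
    (hP : ∀ A : Finset (Fin N),
      ∑ B ∈ Finset.univ.filter (fun B => A ⊆ B), P B = (subMat K A).det)
    (A B : Finset (Fin N)) (hAB : Disjoint A B) (k : Fin N) (hk : k ∉ A ∪ B)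
    (hpos : jointProb P A B ≠ 0) :
    jointProb P (insert k A) B / jointProb P A B =
        (subMat (HB K B) (insert k A)).det / (subMat (HB K B) A).det ∧
    jointProb P (insert k A) B / jointProb P A B =
        HB K B k k - quadForm (HB K B) A k := by
  classical
  have hkA : k ∉ A := fun h => hk (Finset.mem_union_left _ h)
  have hkB : k ∉ B := fun h => hk (Finset.mem_union_right _ h)
  have hAB' : Disjoint (insert k A) B := by
    rw [Finset.disjoint_left]
    intro x hx hxB
    rcases Finset.mem_insert.1 hx with rfl | hx
    · exact hkB hxB
    · exact Finset.disjoint_left.1 hAB hx hxB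
  have hJ0 : jointProb P ∅ B
      = (subMat ((1 : Matrix (Fin N) (Fin N) ℝ) - K) B).det := by
    rw [ie_lemma P K hP ∅ B,
      exp_lemma K B ∅ (by simp : Disjoint (∅ : Finset (Fin N)) B),
      det_subMat_congr (Lmat K B) (Finset.empty_union B)]
    congr 1
    ext i j
    simp [Lmat, subMat, Matrix.sub_apply, Matrix.one_apply, j.2]
  have hnn : ∀ A' : Finset (Fin N), 0 ≤ jointProb P A' B :=
    fun A' => Finset.sum_nonneg fun C _ => hPnn C
  have hApos : 0 < jointProb P A B := lt_of_le_of_ne (hnn A) (Ne.symm hpos)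
  have hmono : jointProb P A B ≤ jointProb P ∅ B := by
    apply Finset.sum_le_sum_of_subset_of_nonneg
    · intro C hC
      simp only [Finset.mem_filter] at hC ⊢
      exact ⟨hC.1, Finset.empty_subset _, hC.2.2⟩
    · intro C _ _
      exact hPnn C
  have hDpos : 0 < (subMat ((1 : Matrix (Fin N) (Fin N) ℝ) - K) B).det :=
    lt_of_lt_of_le hApos (hJ0 ▸ hmono)
  have hDunit : IsUnit (subMat ((1 : Matrix (Fin N) (Fin N) ℝ) - K) B).det :=
    isUnit_iff_ne_zero.2 (ne_of_gt hDpos)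
  have hJA : jointProb P A B
      = (subMat ((1 : Matrix (Fin N) (Fin N) ℝ) - K) B).det * (subMat (HB K B) A).det := by
    rw [ie_lemma P K hP A B, exp_lemma K B A hAB, det_Lmat_eq K A B hAB hDunit]
  have hJA' : jointProb P (insert k A) B
      = (subMat ((1 : Matrix (Fin N) (Fin N) ℝ) - K) B).det
        * (subMat (HB K B) (insert k A)).det := by
    rw [ie_lemma P K hP (insert k A) B, exp_lemma K B (insert k A) hAB',
      det_Lmat_eq K (insert k A) B hAB' hDunit]
  have hHA : (subMat (HB K B) A).det ≠ 0 := by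
    intro h0
    apply hpos
    rw [hJA, h0, mul_zero]
  have hratio : jointProb P (insert k A) B / jointProb P A B
      = (subMat (HB K B) (insert k A)).det / (subMat (HB K B) A).det := by
    rw [hJA, hJA', mul_div_mul_left _ _ (ne_of_gt hDpos)]
  refine ⟨hratio, ?_⟩
  rw [hratio, det_insert_point (HB K B) A k hkA (isUnit_iff_ne_zero.2 hHA),
    mul_comm, mul_div_assoc, div_self hHA, mul_one]
end

section
/- Let H be a Hermitian positive semi-definite matrix and let A ⊆ A' be two index subsets with H_{A'} positive definite, and k ∉ A'. Then H_{{k}×A} (H_A)^{-1} H_{A×{k}} ≤ H_{{k}×A'} (H_{A'})^{-1} H_{A'×{k}}. -/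
namespace Matrix

variable {m n α : Type*} [Fintype m] [Fintype n]

theorem dotProduct_mulVec_comm_of_isSymm [CommSemiring α] {M : Matrix n n α} (hM : M.IsSymm)
    (x y : n → α) : x ⬝ᵥ M *ᵥ y = y ⬝ᵥ M *ᵥ x := by
  rw [dotProduct_mulVec, ← mulVec_transpose, hM.eq, dotProduct_comm]

theorem dotProduct_extend_zero [NonUnitalNonAssocSemiring α] {e : m → n} (he : e.Injective)
    (w : n → α) (x : m → α) : w ⬝ᵥ Function.extend e x 0 = (w ∘ e) ⬝ᵥ x := by
  refine (Fintype.sum_of_injective e he _ _ (fun i hi => ?_) fun i => ?_).symm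
  · simp [Function.extend_apply' _ _ _ (by simpa using hi)]
  · simp [he.extend_apply]

theorem mulVec_extend_zero [NonUnitalNonAssocSemiring α] {e : m → n} (he : e.Injective)
    (M : Matrix n n α) (x : m → α) : M *ᵥ Function.extend e x 0 = M.submatrix id e *ᵥ x :=
  funext fun _ => dotProduct_extend_zero he _ x

theorem PosDef.isGreatest_two_mul_dotProduct_sub_dotProduct_mulVec [DecidableEq n]
    {M : Matrix n n ℝ} (hM : M.PosDef) (v : n → ℝ) :
    IsGreatest (Set.range fun x => 2 * (v ⬝ᵥ x) - x ⬝ᵥ M *ᵥ x) (v ⬝ᵥ M⁻¹ *ᵥ v) := by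
  set y := M⁻¹ *ᵥ v
  have hMy : M *ᵥ y = v := by
    rw [mulVec_mulVec, mul_nonsing_inv _ (M.isUnit_iff_isUnit_det.mp hM.isUnit), one_mulVec]
  refine ⟨⟨y, by simp only [hMy, dotProduct_comm y v]; ring⟩, ?_⟩
  rintro _ ⟨x, rfl⟩
  -- the gap is `(x - y)ᵀ M (x - y)`
  have hgap : 0 ≤ (x - y) ⬝ᵥ M *ᵥ (x - y) := hM.posSemidef.dotProduct_mulVec_nonneg _
  have hcross := dotProduct_mulVec_comm_of_isSymm (isHermitian_iff_isSymm.mp hM.isHermitian) x y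
  simp only [mulVec_sub, dotProduct_sub, sub_dotProduct, hMy] at hgap hcross
  rw [dotProduct_comm x v, dotProduct_comm y v] at *
  linarith

theorem PosDef.dotProduct_submatrix_inv_mulVec_le [DecidableEq m] [DecidableEq n]
    {M : Matrix n n ℝ} (hM : M.PosDef) {e : m → n} (he : e.Injective) (v : n → ℝ) :
    (v ∘ e) ⬝ᵥ (M.submatrix e e)⁻¹ *ᵥ (v ∘ e) ≤ v ⬝ᵥ M⁻¹ *ᵥ v := by
  obtain ⟨x, hx⟩ := ((hM.submatrix he).isGreatest_two_mul_dotProduct_sub_dotProduct_mulVec _).1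
  rw [← hx]
  refine le_of_eq_of_le ?_
    ((hM.isGreatest_two_mul_dotProduct_sub_dotProduct_mulVec v).2 ⟨Function.extend e x 0, rfl⟩)
  dsimp only
  rw [dotProduct_extend_zero he, mulVec_extend_zero he, dotProduct_comm (Function.extend e x 0),
    dotProduct_extend_zero he, dotProduct_comm x]
  rfl

end Matrix

open Matrix

theorem quadForm_eq_dotProduct_inv_mulVec {N : ℕ} {M : Matrix (Fin N) (Fin N) ℝ}
    (hM : M.IsSymm) (A : Finset (Fin N)) (k : Fin N) :
    quadForm M A k = (fun i : A => M i k) ⬝ᵥ (subMat M A)⁻¹ *ᵥ (fun i : A => M i k) := by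
  simp only [quadForm, dotProduct, mulVec, Finset.mul_sum, hM.apply k, mul_assoc]

theorem quadform_monotone_general {N : ℕ} (H : Matrix (Fin N) (Fin N) ℝ)
    (hH : H.PosSemidef) (A A' : Finset (Fin N)) (hAA' : A ⊆ A')
    (hHA' : (subMat H A').PosDef) (k : Fin N) :
    quadForm H A k ≤ quadForm H A' k := by
  have hsymm : H.IsSymm := isHermitian_iff_isSymm.mp hH.isHermitian
  rw [quadForm_eq_dotProduct_inv_mulVec hsymm, quadForm_eq_dotProduct_inv_mulVec hsymm]
  exact hHA'.dotProduct_submatrix_inv_mulVec_le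
    (Subtype.impEmbedding _ _ fun _ h => hAA' h).injective fun i : A' => H i k

/-- Monotonicity of the quadratic form: if `H` is symmetric PSD, `A ⊆ A'`, `H_{A'}` is
positive definite and `k ∉ A'`, then
`H_{{k}×A} (H_A)⁻¹ H_{A×{k}} ≤ H_{{k}×A'} (H_{A'})⁻¹ H_{A'×{k}}`. -/
theorem quadform_monotone {N : ℕ} (H : Matrix (Fin N) (Fin N) ℝ)
    (hH : H.PosSemidef) (A A' : Finset (Fin N)) (hAA' : A ⊆ A')
    (hHA' : (subMat H A').PosDef) (k : Fin N) (hk : k ∉ A') :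
    quadForm H A k ≤ quadForm H A' k :=
  quadform_monotone_general H hH A A' hAA' hHA' k
end

section
/- (Negative association of pointwise conditionals) Let Y be a DPP with kernel K, A, B disjoint subsets with ℙ(A ⊆ Y, B ∩ Y = ∅) > 0, and k ≠ l two points outside A ∪ B. If ℙ(A ∪ {l} ⊆ Y, B ∩ Y = ∅) > 0, then ℙ(k ∈ Y | A ∪ {l} ⊆ Y, B ∩ Y = ∅) ≤ ℙ(k ∈ Y | A ⊆ Y, B ∩ Y = ∅). -/
/-!
Inclusion–exclusion over `B` gives `ℙ(S ⊆ Y, B ∩ Y = ∅) = (-1)^|B| det (K - I_B)_{S ∪ B}` for `S`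
disjoint from `B`. Write `M = K - I_B` (symmetric), `U = A ∪ B`, `d = det M_U` (nonzero since
`ℙ(A ⊆ Y, B ∩ Y = ∅) > 0`) and `s` for the Schur complement of `M_U` in `M`. Up to the common sign
`(-1)^|B|`, the four probabilities in the claim are `d`, `d s_kk`, `d s_ll` and
`d (s_kk s_ll - s_kl²)`, so after clearing denominators the claim reads
`d² (s_kk s_ll - s_kl²) ≤ d² s_kk s_ll`.
-/

section

variable {N : ℕ}

theorem jointProb_insert_right (P : Finset (Fin N) → ℝ) (S B : Finset (Fin N)) (b : Fin N) :
    jointProb P S (insert b B) = jointProb P S B - jointProb P (insert b S) B := by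
  simp only [jointProb, Finset.sum_filter, ← Finset.sum_sub_distrib]
  refine Finset.sum_congr rfl fun C _ => ?_
  by_cases hb : b ∈ C <;>
    simp [hb, Finset.insert_subset_iff, Finset.disjoint_insert_left]

theorem det_subMat_updateRow_single {M : Matrix (Fin N) (Fin N) ℝ} {S : Finset (Fin N)}
    {b : Fin N} (hb : b ∉ S) :
    ((subMat M (insert b S)).updateRow ⟨b, S.mem_insert_self b⟩
      (Pi.single ⟨b, S.mem_insert_self b⟩ 1)).det = (subMat M S).det := by
  set b' : (insert b S : Finset (Fin N)) := ⟨b, Finset.mem_insert_self b S⟩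
  have hS : ∀ j : (insert b S : Finset (Fin N)), (j : Fin N) ∉ S → j = b' := fun j hj =>
    Subtype.ext ((Finset.mem_insert.1 j.2).resolve_right hj)
  rw [Matrix.twoBlockTriangular_det ((subMat M (insert b S)).updateRow b' (Pi.single b' 1))
    (fun j => (j : Fin N) ∈ S)]
  · have : Subsingleton {j : (insert b S : Finset (Fin N)) // ¬ (j : Fin N) ∈ S} :=
      ⟨fun i j => Subtype.ext ((hS i i.2).trans (hS j j.2).symm)⟩
    rw [Matrix.det_eq_elem_of_subsingleton
      (Matrix.toSquareBlockProp _ fun j : (insert b S : Finset (Fin N)) => ¬ (j : Fin N) ∈ S)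
      ⟨b', hb⟩, ← Matrix.det_submatrix_equiv_self
      (Equiv.subtypeSubtypeEquivSubtype fun h => Finset.mem_insert_of_mem h).symm]
    rw [show Matrix.toSquareBlockProp _ _ ⟨b', hb⟩ ⟨b', hb⟩ = (1 : ℝ) by
      simp [Matrix.toSquareBlockProp, Matrix.toBlock], mul_one]
    congr 1
    ext i j
    have hi : (⟨i, Finset.mem_insert_of_mem i.2⟩ : (insert b S : Finset (Fin N))) ≠ b' :=
      fun h => hb ((Subtype.mk.inj h : (i : Fin N) = b) ▸ i.2)
    exact congrFun (Matrix.updateRow_ne hi) _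
  · intro i hi j hj
    rw [hS i hi, Matrix.updateRow_self, Pi.single_eq_of_ne]
    rintro rfl; exact hb hj

theorem det_subMat_sub_single (M : Matrix (Fin N) (Fin N) ℝ) {S : Finset (Fin N)} {b : Fin N}
    (hb : b ∉ S) :
    (subMat (M - Matrix.single b b 1) (insert b S)).det =
      (subMat M (insert b S)).det - (subMat M S).det := by
  set b' : (insert b S : Finset (Fin N)) := ⟨b, Finset.mem_insert_self b S⟩
  have hrow : subMat (M - Matrix.single b b 1) (insert b S) =
      (subMat M (insert b S)).updateRow b' (subMat M (insert b S) b' - Pi.single b' 1) := by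
    ext i j
    by_cases hi : i = b'
    · subst hi
      simp [subMat, b', Matrix.single_apply, Pi.single_apply, Subtype.ext_iff, eq_comm]
    · have hi' : b ≠ i := fun h => hi (Subtype.ext h.symm)
      simp [Matrix.updateRow_ne hi, subMat, hi']
  rw [hrow, sub_eq_add_neg, Matrix.det_updateRow_add, Matrix.updateRow_eq_self,
    ← neg_one_smul ℝ (Pi.single b' 1), Matrix.det_updateRow_smul, det_subMat_updateRow_single hb]
  ring

theorem jointProb_eq_neg_one_pow_mul_det {K : Matrix (Fin N) (Fin N) ℝ} {P : Finset (Fin N) → ℝ}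
    (hP : ∀ A : Finset (Fin N),
      ∑ B ∈ Finset.univ.filter (fun B => A ⊆ B), P B = (subMat K A).det)
    (B : Finset (Fin N)) {S : Finset (Fin N)} (hSB : Disjoint S B) :
    jointProb P S B = (-1) ^ B.card *
      (subMat (K - Matrix.diagonal fun i => if i ∈ B then 1 else 0) (S ∪ B)).det := by
  induction B using Finset.induction_on generalizing S with
  | empty => simp [jointProb, ← hP]
  | @insert b B hbB ih =>
    obtain ⟨hbS, hSB⟩ : b ∉ S ∧ Disjoint S B := by
      simpa [Finset.disjoint_insert_right] using hSB
    have hdiag : K - Matrix.diagonal (fun i => if i ∈ insert b B then 1 else 0) =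
        (K - Matrix.diagonal fun i => if i ∈ B then 1 else 0) - Matrix.single b b 1 := by
      ext i j
      by_cases hij : i = j
      · subst hij
        by_cases hib : b = i
        · simp [← hib, hbB]
        · simp [hib, Ne.symm hib]
      · have hbij : ¬(b = i ∧ b = j) := fun h => hij (h.1.symm.trans h.2)
        simp [hij, hbij]
    rw [jointProb_insert_right, ih hSB, ih (Finset.disjoint_insert_left.2 ⟨hbB, hSB⟩), hdiag,
      Finset.union_insert, det_subMat_sub_single _ (by simp [hbS, hbB]), Finset.insert_union,
      Finset.card_insert_of_notMem hbB]
    ring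

/-- Only the entries outside `U` are meaningful; defining it on all of `Fin N` lets `subMat`
extract its blocks. -/
noncomputable def schurCompl (M : Matrix (Fin N) (Fin N) ℝ) (U : Finset (Fin N)) :
    Matrix (Fin N) (Fin N) ℝ :=
  M - M.submatrix id (fun i : U => (i : Fin N)) * (subMat M U)⁻¹ *
    M.submatrix (fun i : U => (i : Fin N)) id

theorem det_subMat_union {M : Matrix (Fin N) (Fin N) ℝ} {U V : Finset (Fin N)}
    (hUV : Disjoint U V) (hU : IsUnit (subMat M U).det) :
    (subMat M (U ∪ V)).det = (subMat M U).det * (subMat (schurCompl M U) V).det := by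
  let := (subMat M U).invertibleOfIsUnitDet hU
  rw [← Matrix.det_submatrix_equiv_self (Equiv.Finset.union U V hUV)]
  have hblocks : (subMat M (U ∪ V)).submatrix (Equiv.Finset.union U V hUV)
      (Equiv.Finset.union U V hUV) = Matrix.fromBlocks (subMat M U)
        (M.submatrix (↑) (↑)) (M.submatrix (↑) (↑)) (subMat M V) := by
    ext (i | i) (j | j) <;> rfl
  rw [hblocks, Matrix.det_fromBlocks₁₁, Matrix.invOf_eq_nonsing_inv]
  rfl

theorem isSymm_schurCompl {M : Matrix (Fin N) (Fin N) ℝ} (hM : M.IsSymm) (U : Finset (Fin N)) :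
    (schurCompl M U).IsSymm := by
  unfold schurCompl
  have hU : (subMat M U)⁻¹.IsSymm := (hM.submatrix _).inv
  refine hM.sub ?_
  simp only [Matrix.IsSymm, Matrix.transpose_mul, Matrix.transpose_submatrix, hM.eq, hU.eq,
    Matrix.mul_assoc]

theorem det_subMat_singleton (X : Matrix (Fin N) (Fin N) ℝ) (k : Fin N) :
    (subMat X {k}).det = X k k :=
  Matrix.det_eq_elem_of_subsingleton (subMat X {k}) ⟨k, Finset.mem_singleton_self k⟩

theorem det_subMat_pair (X : Matrix (Fin N) (Fin N) ℝ) {k l : Fin N} (hkl : k ≠ l) :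
    (subMat X {k, l}).det = X k k * X l l - X k l * X l k := by
  let e : Fin 2 ≃ ({k, l} : Finset (Fin N)) := Equiv.ofBijective ![⟨k, by simp⟩, ⟨l, by simp⟩]
    ((Fintype.bijective_iff_injective_and_card _).2
      ⟨by simp [Function.Injective, Fin.forall_fin_two, hkl, hkl.symm],
        by rw [Fintype.card_coe, Finset.card_pair hkl, Fintype.card_fin]⟩)
  rw [← Matrix.det_submatrix_equiv_self e, Matrix.det_fin_two]
  rfl

theorem det_subMat_mul_det_subMat_insert_insert_le {M : Matrix (Fin N) (Fin N) ℝ}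
    (hM : M.IsSymm) {U : Finset (Fin N)} (hU : (subMat M U).det ≠ 0) {k l : Fin N}
    (hk : k ∉ U) (hl : l ∉ U) (hkl : k ≠ l) :
    (subMat M U).det * (subMat M (insert k (insert l U))).det ≤
      (subMat M (insert k U)).det * (subMat M (insert l U)).det := by
  have hunion : ∀ V : Finset (Fin N), Disjoint U V →
      (subMat M (U ∪ V)).det = (subMat M U).det * (subMat (schurCompl M U) V).det :=
    fun V hV => det_subMat_union hV (isUnit_iff_ne_zero.2 hU)
  have hkU : insert k U = U ∪ {k} := by rw [Finset.insert_eq, Finset.union_comm]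
  have hlU : insert l U = U ∪ {l} := by rw [Finset.insert_eq, Finset.union_comm]
  have hklU : insert k (insert l U) = U ∪ {k, l} := by
    rw [Finset.insert_eq, Finset.insert_eq, ← Finset.union_assoc, Finset.union_comm]; rfl
  rw [hklU, hkU, hlU, hunion _ (Finset.disjoint_singleton_right.2 hk),
    hunion _ (Finset.disjoint_singleton_right.2 hl),
    hunion _ (by simp [Finset.disjoint_insert_right, hk, hl]), det_subMat_singleton,
    det_subMat_singleton, det_subMat_pair _ hkl, (isSymm_schurCompl hM U).apply k l]
  nlinarith [mul_self_nonneg ((subMat M U).det * schurCompl M U k l)]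

end

theorem dpp_conditional_antitone_in_A_general {N : ℕ} (K : Matrix (Fin N) (Fin N) ℝ)
    (hK : K.PosSemidef)
    (P : Finset (Fin N) → ℝ)
    (hP : ∀ A : Finset (Fin N),
      ∑ B ∈ Finset.univ.filter (fun B => A ⊆ B), P B = (subMat K A).det)
    (A B : Finset (Fin N)) (hAB : Disjoint A B)
    (k l : Fin N) (hkl : k ≠ l) (hk : k ∉ A ∪ B) (hl : l ∉ A ∪ B)
    (hpos : 0 < jointProb P A B) (hposl : 0 < jointProb P (insert l A) B) :
    jointProb P (insert k (insert l A)) B / jointProb P (insert l A) B ≤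
      jointProb P (insert k A) B / jointProb P A B := by
  have hM : (K - Matrix.diagonal fun i => if i ∈ B then 1 else 0).IsSymm :=
    (Matrix.isHermitian_iff_isSymm.1 hK.1).sub (Matrix.isSymm_diagonal _)
  have hinsert : ∀ {x : Fin N} {S : Finset (Fin N)}, x ∉ A ∪ B → Disjoint S B →
      Disjoint (insert x S) B := fun hx hS =>
    Finset.disjoint_insert_left.2 ⟨fun h => hx (Finset.mem_union_right A h), hS⟩
  have hd : (subMat (K - Matrix.diagonal fun i => if i ∈ B then 1 else 0) (A ∪ B)).det ≠ 0 := by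
    rw [jointProb_eq_neg_one_pow_mul_det hP B hAB] at hpos
    exact right_ne_zero_of_mul hpos.ne'
  rw [div_le_div_iff₀ hposl hpos, jointProb_eq_neg_one_pow_mul_det hP B hAB,
    jointProb_eq_neg_one_pow_mul_det hP B (hinsert hl hAB),
    jointProb_eq_neg_one_pow_mul_det hP B (hinsert hk hAB),
    jointProb_eq_neg_one_pow_mul_det hP B (hinsert hk (hinsert hl hAB)),
    Finset.insert_union, Finset.insert_union, Finset.insert_union]
  have key := det_subMat_mul_det_subMat_insert_insert_le hM hd hk hl hkl
  linear_combination mul_le_mul_of_nonneg_left key (mul_self_nonneg ((-1 : ℝ) ^ B.card))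

/-- Negative association of pointwise conditionals of a DPP: conditioning on the extra
point `l` being in `Y` can only decrease the conditional probability that `k ∈ Y`. -/
theorem dpp_conditional_antitone_in_A {N : ℕ} (K : Matrix (Fin N) (Fin N) ℝ)
    (hK : K.PosSemidef) (hIK : ((1 : Matrix (Fin N) (Fin N) ℝ) - K).PosSemidef)
    (P : Finset (Fin N) → ℝ) (hPnn : ∀ C, 0 ≤ P C)
    (hP : ∀ A : Finset (Fin N),
      ∑ B ∈ Finset.univ.filter (fun B => A ⊆ B), P B = (subMat K A).det)
    (A B : Finset (Fin N)) (hAB : Disjoint A B)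
    (k l : Fin N) (hkl : k ≠ l) (hk : k ∉ A ∪ B) (hl : l ∉ A ∪ B)
    (hpos : 0 < jointProb P A B) (hposl : 0 < jointProb P (insert l A) B) :
    jointProb P (insert k (insert l A)) B / jointProb P (insert l A) B ≤
      jointProb P (insert k A) B / jointProb P A B :=
  dpp_conditional_antitone_in_A_general K hK P hP A B hAB k l hkl hk hl hpos hposl
end

section
/- Let Y be a DPP with kernel K, A, B disjoint subsets with ℙ(A ⊆ Y, B ∩ Y = ∅) > 0, and k ≠ l two points outside A ∪ B. If ℙ(A ⊆ Y, (B ∪ {l}) ∩ Y = ∅) > 0, then ℙ(k ∈ Y | A ⊆ Y, (B ∪ {l}) ∩ Y = ∅) ≥ ℙ(k ∈ Y | A ⊆ Y, B ∩ Y = ∅). -/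
/-! Splitting on whether `l ∈ Y`, the claim is equivalent to negative correlation of `k ∈ Y` and
`l ∈ Y` given `E = {A ⊆ Y, B ∩ Y = ∅}`. Inclusion–exclusion over `B` gives
`ℙ(U ⊆ Y, B ∩ Y = ∅) = (-1)^|B| det (K - I_B)_{U ∪ B}`, so with `H = K - I_B` and `W = A ∪ B` this
is `det H_{W+k+l} det H_W ≤ det H_{W+k} det H_{W+l}`. Taking the Schur complement of `H_W` turns it
into `det M ≤ M₀₀ M₁₁` for a symmetric `2 × 2` matrix `M`, true since `det M = M₀₀ M₁₁ - M₀₁²`. -/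

namespace Matrix

variable {n ι κ : Type*} [DecidableEq n] {R : Type*} [CommRing R]

/-- Principal minors are taken as determinants of padded `n × n` matrices, so that minors over
different index sets live on one type. -/
def padOne (M : Matrix n n R) (S : Finset n) : Matrix n n R :=
  of fun i j => if i ∈ S ∧ j ∈ S then M i j else (1 : Matrix n n R) i j

lemma padOne_apply (M : Matrix n n R) (S : Finset n) (i j : n) :
    padOne M S i j = if i ∈ S ∧ j ∈ S then M i j else (1 : Matrix n n R) i j := rfl

noncomputable def schurCompl (H : Matrix n n R) (W : Finset n) (p : ι → n) : Matrix ι ι R :=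
  H.submatrix p p - H.submatrix p ((↑) : W → n) *
    (H.submatrix ((↑) : W → n) ((↑) : W → n) : Matrix W W R)⁻¹ * H.submatrix ((↑) : W → n) p

lemma schurCompl_comp (H : Matrix n n R) (W : Finset n) (p : ι → n) (q : κ → ι) :
    schurCompl H W (p ∘ q) = (schurCompl H W p).submatrix q q :=
  rfl

lemma IsSymm.schurCompl {H : Matrix n n R} (hH : H.IsSymm) (W : Finset n) (p : ι → n) :
    (schurCompl H W p).IsSymm := by
  rw [IsSymm, Matrix.schurCompl, transpose_sub, transpose_mul, transpose_mul, transpose_submatrix,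
    transpose_submatrix, transpose_submatrix, transpose_nonsing_inv, transpose_submatrix, hH.eq,
    Matrix.mul_assoc]

lemma det_submatrix_eq_of_range_eq [Fintype ι] [DecidableEq ι] (M : Matrix n n R) {f : ι → n}
    (hf : Function.Injective f) {S : Finset n} (hS : Set.range f = S) :
    (M.submatrix f f).det = (M.submatrix ((↑) : S → n) (↑)).det := by
  let e : ι ≃ S := (Equiv.ofInjective f hf).trans (Equiv.setCongr hS)
  exact det_submatrix_equiv_self e (M.submatrix ((↑) : S → n) (↑))

variable [Fintype n]

lemma det_padOne (M : Matrix n n R) (S : Finset n) :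
    (padOne M S).det = (M.submatrix ((↑) : S → n) (↑)).det := by
  have hblocks : (padOne M S).submatrix (Equiv.sumCompl (· ∈ S)) (Equiv.sumCompl (· ∈ S)) =
      fromBlocks (M.submatrix ((↑) : S → n) (↑)) 0 0 1 := by
    ext (i | i) (j | j) <;>
      simp [padOne_apply, one_apply, i.2, j.2, Subtype.ext_iff]
    all_goals intro h; exact absurd (h ▸ i.2) (by simp [j.2])
  rw [← det_submatrix_equiv_self (Equiv.sumCompl (· ∈ S)), hblocks, det_fromBlocks_zero₂₁,
    det_one, mul_one]

lemma det_sub_single_self (X : Matrix n n R) (v : n) :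
    (X - single v v 1).det = X.det - (X.updateCol v (Pi.single v 1)).det := by
  have hcol : X - single v v 1 =
      X.updateCol v ((fun i => X i v) + (-1 : R) • (Pi.single v 1 : n → R)) := by
    ext i j
    by_cases hj : j = v
    · subst hj
      by_cases hi : i = j
      · simp [hi, sub_eq_add_neg]
      · simp [hi, Ne.symm hi, sub_eq_add_neg]
    · simp [hj, Ne.symm hj]
  rw [hcol, det_updateCol_add, det_updateCol_smul, updateCol_eq_self]
  ring

lemma det_updateCol_single_eq {X Y : Matrix n n R} {v : n}
    (hY : ∀ i, Y i v = (Pi.single v 1 : n → R) i) (hXY : ∀ i j, i ≠ v → j ≠ v → X i j = Y i j) :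
    (X.updateCol v (Pi.single v 1)).det = Y.det := by
  rw [det_apply', det_apply']
  refine Finset.sum_congr rfl fun σ _ => ?_
  by_cases hσ : σ v = v
  · congr 1
    refine Finset.prod_congr rfl fun i _ => ?_
    by_cases hi : i = v
    · subst hi; simp [hY]
    · rw [updateCol_ne hi]
      exact hXY _ _ (fun h => hi (σ.injective (h.trans hσ.symm))) hi
  · rw [Finset.prod_eq_zero (Finset.mem_univ v) (by simp [hσ]),
      Finset.prod_eq_zero (Finset.mem_univ v) (by simp [hY, hσ])]

lemma det_padOne_sub_single_insert (M : Matrix n n R) {S : Finset n} {v : n} (hv : v ∉ S) :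
    (padOne (M - single v v 1) (insert v S)).det =
      (padOne M (insert v S)).det - (padOne M S).det := by
  have hpad : padOne (M - single v v 1) (insert v S) = padOne M (insert v S) - single v v 1 := by
    ext i j
    by_cases hi : i = v <;> by_cases hj : j = v <;> simp [padOne_apply, eq_comm (a := v), hi, hj]
  rw [hpad, det_sub_single_self, det_updateCol_single_eq]
  · intro i
    by_cases hi : i = v <;> simp [padOne_apply, hv, hi]
  · intro i j hi hj
    simp [padOne_apply, hi, hj]

lemma det_padOne_eq_det_mul_det_schurCompl [Fintype ι] [DecidableEq ι] (H : Matrix n n R)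
    {W S : Finset n} {p : ι → n} (hW : IsUnit (H.submatrix ((↑) : W → n) (↑)).det)
    (hp : Function.Injective p) (hpW : ∀ i, p i ∉ W) (hS : (S : Set n) = ↑W ∪ Set.range p) :
    (padOne H S).det = (H.submatrix ((↑) : W → n) (↑)).det * (schurCompl H W p).det := by
  let := invertibleOfIsUnitDet _ hW
  let f : W ⊕ ι → n := Sum.elim (↑) p
  have hf : Function.Injective f := by
    rintro (i | i) (j | j) h <;> simp only [f, Sum.elim_inl, Sum.elim_inr] at h
    · exact congrArg Sum.inl (Subtype.ext h)
    · exact absurd (h ▸ i.2) (hpW j)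
    · exact absurd (h ▸ j.2) (hpW i)
    · exact congrArg Sum.inr (hp h)
  have hblocks : H.submatrix f f = fromBlocks (H.submatrix ((↑) : W → n) (↑))
      (H.submatrix ((↑) : W → n) p) (H.submatrix p ((↑) : W → n)) (H.submatrix p p) := by
    ext (i | i) (j | j) <;> rfl
  rw [det_padOne, ← det_submatrix_eq_of_range_eq H hf (by rw [Set.Sum.elim_range]; simp [hS]),
    hblocks, det_fromBlocks₁₁, invOf_eq_nonsing_inv, schurCompl]

lemma det_padOne_insert_insert_mul_le {R : Type*} [Field R] [LinearOrder R]
    [IsStrictOrderedRing R] {H : Matrix n n R} (hH : H.IsSymm) {W : Finset n} {k l : n}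
    (hk : k ∉ W) (hl : l ∉ W) (hkl : k ≠ l) (hW : (padOne H W).det ≠ 0) :
    (padOne H (insert k (insert l W))).det * (padOne H W).det ≤
      (padOne H (insert k W)).det * (padOne H (insert l W)).det := by
  set a := (H.submatrix ((↑) : W → n) (↑)).det
  have ha : IsUnit a := (det_padOne H W ▸ hW).isUnit
  set M := schurCompl H W ![k, l]
  have hkl_W : ∀ i, ![k, l] i ∉ W := Fin.forall_fin_two.2 ⟨hk, hl⟩
  have hpair : (padOne H (insert k (insert l W))).det = a * M.det := by
    refine det_padOne_eq_det_mul_det_schurCompl H ha ?_ hkl_W ?_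
    · intro i j; fin_cases i <;> fin_cases j <;> simp [hkl, hkl.symm]
    · ext; simp [or_left_comm]
  have hsingle (j : Fin 2) : (padOne H (insert (![k, l] j) W)).det = a * M j j := by
    rw [det_padOne_eq_det_mul_det_schurCompl H ha (p := ![k, l] ∘ fun _ : Unit => j)
      (fun _ _ _ => rfl) (fun _ => hkl_W j) (by ext; simp [or_comm, eq_comm]),
      schurCompl_comp, det_unique (n := Unit)]
    rfl
  have hk_single : (padOne H (insert k W)).det = a * M 0 0 := hsingle 0
  have hl_single : (padOne H (insert l W)).det = a * M 1 1 := hsingle 1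
  have hM : M 1 0 = M 0 1 := (hH.schurCompl W ![k, l]).apply 0 1
  rw [hpair, hk_single, hl_single, det_padOne H W, det_fin_two, hM]
  nlinarith [sq_nonneg (a * M 0 1)]

end Matrix

open Matrix

variable {N : ℕ}

lemma jointProb_eq_add_insert (P : Finset (Fin N) → ℝ) (U V : Finset (Fin N)) (v : Fin N) :
    jointProb P U V = jointProb P U (insert v V) + jointProb P (insert v U) V := by
  unfold jointProb
  rw [← Finset.sum_filter_add_sum_filter_not _ (v ∈ ·), add_comm, Finset.filter_filter,
    Finset.filter_filter]
  congr 2 <;> ext C <;> simp [Finset.insert_subset_iff, Finset.disjoint_insert_left] <;> tauto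

lemma jointProb_empty_right {K : Matrix (Fin N) (Fin N) ℝ} {P : Finset (Fin N) → ℝ}
    (hP : ∀ A : Finset (Fin N),
      ∑ B ∈ Finset.univ.filter (fun B => A ⊆ B), P B = (subMat K A).det)
    (U : Finset (Fin N)) : jointProb P U ∅ = (subMat K U).det := by
  simp [jointProb, ← hP]

lemma jointProb_eq_det {K : Matrix (Fin N) (Fin N) ℝ} {P : Finset (Fin N) → ℝ}
    (hP : ∀ A : Finset (Fin N),
      ∑ B ∈ Finset.univ.filter (fun B => A ⊆ B), P B = (subMat K A).det)
    {U V : Finset (Fin N)} (hUV : Disjoint U V) :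
    jointProb P U V =
      (-1) ^ V.card * (padOne (K - diagonal fun i => if i ∈ V then 1 else 0) (U ∪ V)).det := by
  induction V using Finset.induction_on generalizing U with
  | empty => simp [jointProb_empty_right hP, det_padOne]; rfl
  | insert a s ha ih =>
    obtain ⟨haU, hUs⟩ := Finset.disjoint_insert_right.1 hUV
    have hdiff : (K - diagonal fun i => if i ∈ insert a s then 1 else 0) =
        (K - diagonal fun i => if i ∈ s then 1 else 0) - single a a 1 := by
      ext i j
      by_cases hij : i = j
      · subst hij
        by_cases hia : i = a
        · simp [hia, ha]
        · simp [hia, Ne.symm hia]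
      · have : ¬(a = i ∧ a = j) := fun h => hij (h.1.symm.trans h.2)
        simp [hij, this]
    have hsplit := jointProb_eq_add_insert P U s a
    rw [ih hUs, ih (Finset.disjoint_insert_left.2 ⟨ha, hUs⟩), Finset.insert_union] at hsplit
    rw [Finset.card_insert_of_notMem ha, Finset.union_insert, hdiff,
      det_padOne_sub_single_insert _ (by simp [haU, ha])]
    linear_combination -hsplit

lemma jointProb_insert_insert_mul_le {K : Matrix (Fin N) (Fin N) ℝ} (hK : K.IsSymm)
    {P : Finset (Fin N) → ℝ}
    (hP : ∀ A : Finset (Fin N),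
      ∑ B ∈ Finset.univ.filter (fun B => A ⊆ B), P B = (subMat K A).det)
    {A B : Finset (Fin N)} (hAB : Disjoint A B) {k l : Fin N} (hkl : k ≠ l)
    (hk : k ∉ A ∪ B) (hl : l ∉ A ∪ B) (hpos : jointProb P A B ≠ 0) :
    jointProb P (insert k (insert l A)) B * jointProb P A B ≤
      jointProb P (insert k A) B * jointProb P (insert l A) B := by
  set H := K - diagonal fun i => if i ∈ B then 1 else 0
  have hH : H.IsSymm := hK.sub (isSymm_diagonal _)
  have hkB : k ∉ B := fun h => hk (Finset.mem_union_right _ h)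
  have hlB : l ∉ B := fun h => hl (Finset.mem_union_right _ h)
  rw [jointProb_eq_det hP hAB, jointProb_eq_det hP (Finset.disjoint_insert_left.2 ⟨hkB, hAB⟩),
    jointProb_eq_det hP (Finset.disjoint_insert_left.2 ⟨hlB, hAB⟩),
    jointProb_eq_det hP
      (Finset.disjoint_insert_left.2 ⟨hkB, Finset.disjoint_insert_left.2 ⟨hlB, hAB⟩⟩)]
  simp only [Finset.insert_union]
  have hsign (a b : ℝ) : (-1) ^ B.card * a * ((-1) ^ B.card * b) = a * b := by
    rw [mul_mul_mul_comm, ← pow_add, ← two_mul, pow_mul, neg_one_sq, one_pow, one_mul]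
  have hW : (padOne H (A ∪ B)).det ≠ 0 := by
    rintro h; exact hpos (by rw [jointProb_eq_det hP hAB, h, mul_zero])
  rw [hsign, hsign]
  exact det_padOne_insert_insert_mul_le hH hk hl hkl hW

theorem dpp_conditional_monotone_in_B_general {N : ℕ} (K : Matrix (Fin N) (Fin N) ℝ)
    (hK : K.PosSemidef)
    (P : Finset (Fin N) → ℝ)
    (hP : ∀ A : Finset (Fin N),
      ∑ B ∈ Finset.univ.filter (fun B => A ⊆ B), P B = (subMat K A).det)
    (A B : Finset (Fin N)) (hAB : Disjoint A B)
    (k l : Fin N) (hkl : k ≠ l) (hk : k ∉ A ∪ B) (hl : l ∉ A ∪ B)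
    (hpos : 0 < jointProb P A B) (hposl : 0 < jointProb P A (insert l B)) :
    jointProb P (insert k A) (insert l B) / jointProb P A (insert l B) ≥
      jointProb P (insert k A) B / jointProb P A B := by
  have hsplit := jointProb_eq_add_insert P A B l
  have hsplit_k := jointProb_eq_add_insert P (insert k A) B l
  rw [Finset.insert_comm] at hsplit_k
  have hneg := jointProb_insert_insert_mul_le (isHermitian_iff_isSymm.1 hK.isHermitian) hP hAB
    hkl hk hl hpos.ne'
  rw [ge_iff_le, div_le_div_iff₀ hpos hposl]
  linear_combination hneg - jointProb P (insert k A) B * hsplit + jointProb P A B * hsplit_k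

/-- Conditioning on the extra point `l` being absent from `Y` can only increase the
conditional probability that `k ∈ Y`. -/
theorem dpp_conditional_monotone_in_B {N : ℕ} (K : Matrix (Fin N) (Fin N) ℝ)
    (hK : K.PosSemidef) (hIK : ((1 : Matrix (Fin N) (Fin N) ℝ) - K).PosSemidef)
    (P : Finset (Fin N) → ℝ) (hPnn : ∀ C, 0 ≤ P C)
    (hP : ∀ A : Finset (Fin N),
      ∑ B ∈ Finset.univ.filter (fun B => A ⊆ B), P B = (subMat K A).det)
    (A B : Finset (Fin N)) (hAB : Disjoint A B)
    (k l : Fin N) (hkl : k ≠ l) (hk : k ∉ A ∪ B) (hl : l ∉ A ∪ B)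
    (hpos : 0 < jointProb P A B) (hposl : 0 < jointProb P A (insert l B)) :
    jointProb P (insert k A) (insert l B) / jointProb P A (insert l B) ≥
      jointProb P (insert k A) B / jointProb P A B :=
  dpp_conditional_monotone_in_B_general K hK P hP A B hAB k l hkl hk hl hpos hposl
end

section
/- Let Y be a DPP with kernel K. For k ∈ {1,…,N}, if ℙ(Y ∩ {1,…,k−1} = ∅) > 0, then the maximum of ℙ(Y_k = 1 | Y_{1:k−1} = y_{1:k−1}) over all admissible histories y_{1:k−1} (i.e. with ℙ(Y_{1:k−1} = y_{1:k−1}) > 0) is attained at y_{1:k−1} = 0 and equals K(k,k) + K_{{k}×{1:k−1}} ((I−K)_{{1:k−1}})^{-1} K_{{1:k−1}×{k}}. -/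
/-- `ℙ(Y ∩ {1,…,k−1} = S)` for a point process with distribution `P`. -/
noncomputable def histProb {N : ℕ} (P : Finset (Fin N) → ℝ) (k : Fin N)
    (S : Finset (Fin N)) : ℝ :=
  ∑ C ∈ Finset.univ.filter (fun C => C ∩ Finset.univ.filter (fun i => i < k) = S), P C

/-- `ℙ(k ∈ Y, Y ∩ {1,…,k−1} = S)` for a point process with distribution `P`. -/
noncomputable def histProbIn {N : ℕ} (P : Finset (Fin N) → ℝ) (k : Fin N)
    (S : Finset (Fin N)) : ℝ :=
  ∑ C ∈ Finset.univ.filter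
      (fun C => C ∩ Finset.univ.filter (fun i => i < k) = S ∧ k ∈ C), P C

/-!
Write `I_S` for the diagonal projection onto the sites in `S`. Inclusion–exclusion over the sites
of a window `W` that must avoid `Y`, together with the expansion of `det (M - I_V)` into principal
minors by multilinearity in the rows, gives `ℙ(Y ∩ W = S) = (-1)^|S| det ((I - K)_W - I_S)`.
Adding the site `k` to the window and taking the Schur complement of the `W`-block, the
conditional probability of `k ∈ Y` given the history `S` is `K(k,k) + bᵀ (A - I_S)⁻¹ b` with
`A = (I - K)_{1:k-1}` and `b = K_{1:k-1,k}`. Since `0 ≤ A ≤ I` and `I_S` is an orthogonal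
projection, the resolvent identity writes `A⁻¹ - (A - I_S)⁻¹` as `G I_S (A⁻¹ - I) I_S G` with
`G = (A - I_S)⁻¹`, which is positive semidefinite; so the empty history maximises the conditional
probability.
-/

open Finset Matrix
open scoped ComplexOrder

section Finsets

variable {α R : Type*} [DecidableEq α] [CommRing R]

theorem inter_eq_iff_subset_and_disjoint_sdiff {W S C : Finset α} (hS : S ⊆ W) :
    C ∩ W = S ↔ S ⊆ C ∧ Disjoint (W \ S) C := by
  simp only [Finset.ext_iff, mem_inter, subset_iff, disjoint_left, mem_sdiff]
  grind

theorem inter_insert_eq_insert_iff {W S C : Finset α} {k : α} (hk : k ∉ W) (hS : S ⊆ W) :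
    C ∩ insert k W = insert k S ↔ C ∩ W = S ∧ k ∈ C := by
  simp only [Finset.ext_iff, mem_inter, mem_insert]
  grind

theorem sum_powerset_filter_neg_one_pow (U V C : Finset α) :
    ∑ B ∈ V.powerset with U ∪ B ⊆ C, (-1 : R) ^ #B = if U ⊆ C ∧ Disjoint V C then 1 else 0 := by
  by_cases hU : U ⊆ C
  · have hfilter : {B ∈ V.powerset | U ∪ B ⊆ C} = (V ∩ C).powerset := by
      ext B
      simp only [mem_filter, mem_powerset, union_subset_iff, hU, true_and, subset_inter_iff]
    have h := congrArg (Int.cast : ℤ → R) (sum_powerset_neg_one_pow_card (x := V ∩ C))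
    push_cast at h
    simp only [hfilter, h, hU, true_and, disjoint_iff_inter_eq_empty]
  · rw [if_neg (by tauto), sum_eq_zero]
    intro B hB
    exact absurd (union_subset_iff.1 (mem_filter.1 hB).2).1 hU

theorem sum_subset_disjoint_eq_sum_powerset [Fintype α] (P : Finset α → R) (U V : Finset α) :
    ∑ C with U ⊆ C ∧ Disjoint V C, P C
      = ∑ B ∈ V.powerset, (-1) ^ #B * ∑ C with U ∪ B ⊆ C, P C := by
  simp_rw [sum_filter, mul_sum, mul_ite, mul_zero]
  rw [sum_comm]
  refine sum_congr rfl fun C _ => ?_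
  rw [← sum_filter, ← sum_mul, sum_powerset_filter_neg_one_pow, ite_mul, one_mul, zero_mul]

theorem sum_powerset_sdiff {M : Type*} [AddCommMonoid M] (V : Finset α) (f : Finset α → M) :
    ∑ B ∈ V.powerset, f B = ∑ B ∈ V.powerset, f (V \ B) := by
  refine sum_nbij' (V \ ·) (V \ ·) ?_ ?_ ?_ ?_ ?_ <;> simp +contextual

theorem sum_powerset_map {β M : Type*} [AddCommMonoid M] (e : β ↪ α) (V : Finset β)
    (f : Finset α → M) :
    ∑ B ∈ (V.map e).powerset, f B = ∑ B ∈ V.powerset, f (B.map e) := by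
  rw [map_eq_image, powerset_image, sum_image fun _ _ _ _ h => image_injective e.injective h]
  simp only [map_eq_image]

theorem neg_one_pow_mul_neg_one_pow_add_mul (a b : ℕ) (x : R) :
    (-1) ^ a * ((-1) ^ (a + b) * x) = (-1) ^ b * x := by
  rw [pow_add, ← mul_assoc, ← mul_assoc, ← pow_add, Even.neg_one_pow ⟨a, rfl⟩, one_mul]

end Finsets

namespace Matrix

section Determinants

variable {ι R : Type*} [Fintype ι] [DecidableEq ι] [CommRing R]

theorem det_piecewise_neg_one_eq_submatrix_det (M : Matrix ι ι R) (B : Finset ι) :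
    (of (B.piecewise (-1 : Matrix ι ι R) M)).det
      = (-1) ^ #B * (M.submatrix ((↑) : ↥Bᶜ → ι) (↑)).det := by
  have hrows : of (B.piecewise (-1 : Matrix ι ι R) M)
      = of fun i j => (if i ∈ B then -1 else 1) * of (Bᶜ.piecewise M.row (row 1)) i j := by
    ext i j
    by_cases hi : i ∈ B <;> simp [hi, row, Finset.piecewise]
  rw [hrows, det_mul_column, det_piecewise_one_eq_submatrix_det, Fintype.prod_ite_mem,
    prod_const]

theorem det_sub_diagonal_eq_sum_powerset (M : Matrix ι ι R) (V : Finset ι) :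
    (M - diagonal fun i => if i ∈ V then 1 else 0).det
      = ∑ B ∈ V.powerset, (-1) ^ #B * (M.submatrix ((↑) : ↥Bᶜ → ι) (↑)).det := by
  have hrows : M - diagonal (fun i => if i ∈ V then 1 else 0)
      = of (V.piecewise (-1 + M : Matrix ι ι R) M) := by
    ext i j
    by_cases hi : i ∈ V <;> rcases eq_or_ne i j with rfl | hij <;>
      simp [Finset.piecewise, sub_eq_neg_add, *]
  rw [hrows]
  exact ((detRowAlternating : (ι → R) [⋀^ι]→ₗ[R] R).toMultilinearMap.map_piecewise_add _ _ _).trans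
    (sum_congr rfl fun B _ => det_piecewise_neg_one_eq_submatrix_det M B)

theorem det_fromBlocks_replicateCol_replicateRow {o : Type*} [Unique o] (G : Matrix ι ι R)
    (hG : IsUnit G.det) (b c : ι → R) (d : R) :
    (fromBlocks G (replicateCol o b) (replicateRow o c) (of fun _ _ => d)).det
      = G.det * (d - c ⬝ᵥ (G⁻¹ *ᵥ b)) := by
  have := G.invertibleOfIsUnitDet hG
  rw [det_fromBlocks₁₁, det_unique (_ - _), invOf_eq_nonsing_inv, Matrix.sub_apply,
    Matrix.mul_assoc]
  simp [Matrix.mul_apply, dotProduct, mulVec]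

theorem isIdempotentElem_diagonal_ite (p : ι → Prop) [DecidablePred p] :
    IsIdempotentElem (diagonal fun i => if p i then (1 : R) else 0) := by
  rw [IsIdempotentElem, diagonal_mul_diagonal]
  congr! 2 with i
  split_ifs <;> simp

end Determinants

section LoewnerOrder

variable {ι 𝕜 : Type*} [Fintype ι] [DecidableEq ι] [RCLike 𝕜] {A P : Matrix ι ι 𝕜}

theorem PosSemidef.inv_sub_one (hA : A.PosSemidef) (hA₁ : (1 - A).PosSemidef)
    (hdet : IsUnit A.det) : (A⁻¹ - 1).PosSemidef := by
  have hX : (A⁻¹ - 1)ᴴ = A⁻¹ - 1 := (hA.1.inv.sub isHermitian_one).eq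
  have hsplit : A⁻¹ - 1 = (1 - A) + (A⁻¹ - 1) * A * (A⁻¹ - 1)ᴴ := by
    rw [hX]
    calc A⁻¹ - 1 = (1 - A) + ((A⁻¹ * A) * A⁻¹ - A⁻¹ * A - (A * A⁻¹) + A) := by
          rw [nonsing_inv_mul _ hdet, mul_nonsing_inv _ hdet]; noncomm_ring
      _ = _ := by noncomm_ring
  rw [hsplit]
  exact hA₁.add (hA.mul_mul_conjTranspose_same _)

theorem PosSemidef.inv_sub_inv_sub_of_isIdempotentElem (hA : A.PosSemidef)
    (hA₁ : (1 - A).PosSemidef) (hdet : IsUnit A.det) (hP : P.IsHermitian)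
    (hPP : IsIdempotentElem P) (hdetP : IsUnit (A - P).det) :
    (A⁻¹ - (A - P)⁻¹).PosSemidef := by
  set G := (A - P)⁻¹
  have hG : Gᴴ = G := (hA.1.sub hP).inv.eq
  have hresolvent : A⁻¹ - G = -(G * P * A⁻¹) :=
    calc A⁻¹ - G = G * (A - P) * A⁻¹ - G * (A * A⁻¹) := by
          rw [nonsing_inv_mul _ hdetP, mul_nonsing_inv _ hdet, one_mul, mul_one]
      _ = _ := by noncomm_ring
  have hconj : (G * P) * (A⁻¹ - 1) * (G * P)ᴴ = -(G * P * A⁻¹) :=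
    calc (G * P) * (A⁻¹ - 1) * (G * P)ᴴ = G * P * A⁻¹ * P * G - G * (P * P) * G := by
          rw [conjTranspose_mul, hG, hP.eq]; noncomm_ring
      _ = G * P * A⁻¹ * P * G - G * P * (A⁻¹ * A) * G := by
          rw [hPP.eq, nonsing_inv_mul _ hdet, mul_one]
      _ = -(G * P * A⁻¹ * ((A - P) * G)) := by noncomm_ring
      _ = _ := by rw [mul_nonsing_inv _ hdetP, mul_one]
  rw [hresolvent, ← hconj]
  exact (hA.inv_sub_one hA₁ hdet).mul_mul_conjTranspose_same _

end LoewnerOrder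

end Matrix

section DeterminantalProcess

variable {N : ℕ} {K : Matrix (Fin N) (Fin N) ℝ} {P : Finset (Fin N) → ℝ}

def IsDeterminantal (P : Finset (Fin N) → ℝ) (K : Matrix (Fin N) (Fin N) ℝ) : Prop :=
  ∀ A : Finset (Fin N), ∑ B with A ⊆ B, P B = (subMat K A).det

section Window

variable {ι : Type*} [DecidableEq ι]

theorem det_subMat_map (e : ι ↪ Fin N) (D : Finset ι) :
    (subMat K (D.map e)).det = ((K.submatrix e e).submatrix ((↑) : ↥D → ι) (↑)).det :=
  (det_submatrix_equiv_self (D.equivMap e) _).symm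

variable [Fintype ι]

theorem sum_subset_disjoint_eq_det (hP : IsDeterminantal P K) (e : ι ↪ Fin N) (V : Finset ι) :
    ∑ C with Vᶜ.map e ⊆ C ∧ Disjoint (V.map e) C, P C
      = (-1) ^ #V * (K.submatrix e e - diagonal fun i => if i ∈ V then 1 else 0).det := by
  rw [sum_subset_disjoint_eq_sum_powerset, sum_powerset_map, det_sub_diagonal_eq_sum_powerset,
    mul_sum]
  conv_rhs => rw [sum_powerset_sdiff]
  refine sum_congr rfl fun B hB => ?_
  have hcompl : (V \ B)ᶜ = Vᶜ ∪ B := by rw [sdiff_eq, compl_inf, compl_compl, sup_eq_union]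
  rw [← map_union, hP, det_subMat_map, hcompl, card_map,
    ← card_sdiff_add_card_eq_card (mem_powerset.1 hB), mul_left_comm,
    neg_one_pow_mul_neg_one_pow_add_mul]

theorem sum_inter_eq_det (hP : IsDeterminantal P K) (e : ι ↪ Fin N) {S : Finset (Fin N)}
    (hS : S ⊆ univ.map e) :
    ∑ C with C ∩ univ.map e = S, P C
      = (-1) ^ #S * ((1 - K).submatrix e e - diagonal fun i => if e i ∈ S then 1 else 0).det := by
  set V : Finset ι := {i | e i ∉ S}
  have hin : Vᶜ.map e = S := by
    ext x
    have hx := @hS x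
    simp only [V, mem_map, compl_filter, not_not, mem_filter, mem_univ, true_and] at hx ⊢
    grind
  have hout : V.map e = univ.map e \ S := by
    ext x
    simp only [V, mem_map, mem_filter, mem_univ, true_and, mem_sdiff]
    grind
  have hmat : K.submatrix e e - diagonal (fun i => if i ∈ V then 1 else 0)
      = -((1 - K).submatrix e e - diagonal fun i => if e i ∈ S then 1 else 0) := by
    ext i j
    by_cases hi : e i ∈ S <;> rcases eq_or_ne i j with rfl | hij <;> simp [V, one_apply, *]
  have hcard : #V + #S = Fintype.card ι := by rw [← hin, card_map, card_add_card_compl]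
  have hevent (C : Finset (Fin N)) :
      C ∩ univ.map e = S ↔ Vᶜ.map e ⊆ C ∧ Disjoint (V.map e) C := by
    rw [hin, hout]
    exact inter_eq_iff_subset_and_disjoint_sdiff hS
  simp_rw [hevent]
  rw [sum_subset_disjoint_eq_det hP, hmat, det_neg, ← hcard, neg_one_pow_mul_neg_one_pow_add_mul]

theorem isUnit_det_of_sum_inter_eq_ne_zero (hP : IsDeterminantal P K) (e : ι ↪ Fin N)
    {S : Finset (Fin N)} (hS : S ⊆ univ.map e) (hpos : ∑ C with C ∩ univ.map e = S, P C ≠ 0) :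
    IsUnit ((1 - K).submatrix e e - diagonal fun i => if e i ∈ S then 1 else 0).det :=
  (right_ne_zero_of_mul (sum_inter_eq_det hP e hS ▸ hpos)).isUnit

theorem sum_inter_eq_and_mem_div_sum_inter_eq (hP : IsDeterminantal P K) (e : ι ↪ Fin N)
    {k : Fin N} (hk : k ∉ univ.map e) {S : Finset (Fin N)} (hS : S ⊆ univ.map e)
    (hpos : ∑ C with C ∩ univ.map e = S, P C ≠ 0) :
    (∑ C with C ∩ univ.map e = S ∧ k ∈ C, P C) / ∑ C with C ∩ univ.map e = S, P C
      = K k k + (fun j => K k (e j)) ⬝ᵥ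
          (((1 - K).submatrix e e - diagonal fun i => if e i ∈ S then 1 else 0)⁻¹ *ᵥ
            fun i => K (e i) k) := by
  let e' : ι ⊕ Unit ↪ Fin N :=
    (Equiv.optionEquivSumPUnit ι).symm.toEmbedding.trans (e.optionElim k (by simpa using hk))
  have hk' (i : ι) : e i ≠ k := fun h => hk (h ▸ mem_map_of_mem e (mem_univ i))
  have hW : univ.map e' = insert k (univ.map e) := by
    ext x
    simp [e', eq_comm, or_comm]
  have hblocks : ((1 - K).submatrix e' e' - diagonal fun x => if e' x ∈ insert k S then 1 else 0)
      = fromBlocks ((1 - K).submatrix e e - diagonal fun i => if e i ∈ S then 1 else 0)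
          (replicateCol Unit (-fun i => K (e i) k)) (replicateRow Unit (-fun j => K k (e j)))
          (of fun _ _ => -K k k) := by
    ext (i | _) (j | _) <;> simp [e', hk', diagonal_apply, one_apply, (hk' _).symm]
  have hG := isUnit_det_of_sum_inter_eq_ne_zero hP e hS hpos
  simp_rw [← inter_insert_eq_insert_iff hk hS, ← hW]
  rw [sum_inter_eq_det hP e' (hW ▸ insert_subset_insert k hS), sum_inter_eq_det hP e hS, hblocks,
    det_fromBlocks_replicateCol_replicateRow _ hG, card_insert_of_notMem fun h => hk (hS h),
    neg_dotProduct, mulVec_neg, dotProduct_neg, pow_succ]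
  have hD := hG.ne_zero
  field_simp
  ring

end Window

theorem isUnit_det_of_histProb_ne_zero (hP : IsDeterminantal P K) {k : Fin N}
    {S : Finset (Fin N)} (hS : S ⊆ univ.filter (· < k)) (hpos : histProb P k S ≠ 0) :
    IsUnit ((1 - K).submatrix (Subtype.val : {i // i < k} → Fin N) Subtype.val -
      diagonal fun i : {i // i < k} => if (i : Fin N) ∈ S then 1 else 0).det := by
  rw [histProb, ← univ_map_subtype (· < k)] at *
  exact isUnit_det_of_sum_inter_eq_ne_zero hP _ hS hpos

theorem histProbIn_div_histProb (hP : IsDeterminantal P K) {k : Fin N} {S : Finset (Fin N)}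
    (hS : S ⊆ univ.filter (· < k)) (hpos : histProb P k S ≠ 0) :
    histProbIn P k S / histProb P k S
      = K k k + (fun j : {i // i < k} => K k j) ⬝ᵥ
          (((1 - K).submatrix (Subtype.val : {i // i < k} → Fin N) Subtype.val -
            diagonal fun i : {i // i < k} => if (i : Fin N) ∈ S then 1 else 0)⁻¹ *ᵥ
              fun i : {i // i < k} => K i k) := by
  rw [histProb, histProbIn, ← univ_map_subtype (· < k)] at *
  exact sum_inter_eq_and_mem_div_sum_inter_eq hP _ (by simp) hS hpos

end DeterminantalProcess

theorem dpp_optimal_bernoulli_probability_general {N : ℕ} (K : Matrix (Fin N) (Fin N) ℝ)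
    (hK : K.PosSemidef) (hIK : ((1 : Matrix (Fin N) (Fin N) ℝ) - K).PosSemidef)
    (P : Finset (Fin N) → ℝ)
    (hP : ∀ A : Finset (Fin N),
      ∑ B ∈ Finset.univ.filter (fun B => A ⊆ B), P B = (subMat K A).det)
    (k : Fin N) (h0 : 0 < histProb P k ∅) :
    (∀ S : Finset (Fin N), S ⊆ Finset.univ.filter (fun i => i < k) →
        0 < histProb P k S →
        histProbIn P k S / histProb P k S ≤ histProbIn P k ∅ / histProb P k ∅) ∧
    histProbIn P k ∅ / histProb P k ∅ =
      K k k + ∑ i : {i : Fin N // i < k}, ∑ j : {j : Fin N // j < k},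
        K k i.1 *
          ((((1 : Matrix (Fin N) (Fin N) ℝ) - K).submatrix
              (fun a : {i : Fin N // i < k} => a.1)
              (fun a : {j : Fin N // j < k} => a.1))⁻¹ i j) *
          K j.1 k := by
  set A := (1 - K).submatrix (Subtype.val : {i // i < k} → Fin N) Subtype.val
  have hratio₀ := histProbIn_div_histProb hP (empty_subset _) h0.ne'
  simp only [notMem_empty, if_false, diagonal_zero, sub_zero] at hratio₀
  refine ⟨fun S hS hpos => ?_, by
    rw [hratio₀]
    simp only [dotProduct, mulVec, mul_sum, mul_assoc]
    rfl⟩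
  have hA₁ : (1 - A).PosSemidef := by
    convert hK.submatrix ((↑) : {i // i < k} → Fin N)
    ext i j
    simp [A, one_apply, Subtype.ext_iff]
  have hAdet : IsUnit A.det := by
    simpa using isUnit_det_of_histProb_ne_zero hP (empty_subset _) h0.ne'
  have hsymm : (fun j : {i // i < k} => K k j) = fun i : {i // i < k} => K i k :=
    funext fun j => by simpa using hK.1.apply j k
  have hle := ((hIK.submatrix _).inv_sub_inv_sub_of_isIdempotentElem hA₁ hAdet
    (isHermitian_diagonal _) (isIdempotentElem_diagonal_ite _)
    (isUnit_det_of_histProb_ne_zero hP hS hpos.ne')).dotProduct_mulVec_nonneg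
      fun i : {i // i < k} => K i k
  rw [star_trivial, sub_mulVec, dotProduct_sub, sub_nonneg] at hle
  rw [histProbIn_div_histProb hP hS hpos.ne', hratio₀, hsymm]
  linarith

/-- If `ℙ(Y ∩ {1,…,k−1} = ∅) > 0`, the maximum of `ℙ(Y_k = 1 | Y_{1:k−1} = y_{1:k−1})`
over admissible histories is attained at the empty history and equals
`K(k,k) + K_{{k}×{1:k−1}} ((I−K)_{{1:k−1}})⁻¹ K_{{1:k−1}×{k}}`. -/
theorem dpp_optimal_bernoulli_probability {N : ℕ} (K : Matrix (Fin N) (Fin N) ℝ)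
    (hK : K.PosSemidef) (hIK : ((1 : Matrix (Fin N) (Fin N) ℝ) - K).PosSemidef)
    (P : Finset (Fin N) → ℝ) (hPnn : ∀ C, 0 ≤ P C)
    (hP : ∀ A : Finset (Fin N),
      ∑ B ∈ Finset.univ.filter (fun B => A ⊆ B), P B = (subMat K A).det)
    (k : Fin N) (h0 : 0 < histProb P k ∅) :
    (∀ S : Finset (Fin N), S ⊆ Finset.univ.filter (fun i => i < k) →
        0 < histProb P k S →
        histProbIn P k S / histProb P k S ≤ histProbIn P k ∅ / histProb P k ∅) ∧
    histProbIn P k ∅ / histProb P k ∅ =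
      K k k + ∑ i : {i : Fin N // i < k}, ∑ j : {j : Fin N // j < k},
        K k i.1 *
          ((((1 : Matrix (Fin N) (Fin N) ℝ) - K).submatrix
              (fun a : {i : Fin N // i < k} => a.1)
              (fun a : {j : Fin N // j < k} => a.1))⁻¹ i j) *
          K j.1 k :=
  dpp_optimal_bernoulli_probability_general K hK hIK P hP k h0
end

section
/- (Thinning coupling preserves distribution) Let X, Y be discrete point processes on {1,…,N} (identified with random vectors in {0,1}^N) such that whenever ℙ(Z_{1:k−1} = z_{1:k−1}, X_{1:k−1} = x_{1:k−1}) > 0 one has ℙ(Y_k = 1 | Y_{1:k−1} = z_{1:k−1}) ≤ ℙ(X_k = 1 | X_{1:k−1} = x_{1:k−1}), and let (X, Z) be the coupling defined sequentially by ℙ(X_k = 1 | Z_{1:k−1}, X_{1:k−1} = x_{1:k−1}) = ℙ(X_k = 1 | X_{1:k−1} = x_{1:k−1}) and ℙ(Z_k = 1 | Z_{1:k−1} = z_{1:k−1}, X_{1:k} = x_{1:k}) = 1_{x_k = 1} · ℙ(Y_k = 1 | Y_{1:k−1} = z_{1:k−1}) / ℙ(X_k = 1 | X_{1:k−1} = x_{1:k−1}).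 Then Z ⊆ X almost surely and Z has the same distribution as Y. -/
/-!
Write `A = ℙ(X_{<k} = x, Z_{<k} = z)`, `p = ℙ(X_k = 1 | X_{<k} = x)` and
`q = ℙ(Y_k = 1 | Y_{<k} = z)`. The coupling hypotheses only speak about conditioning events of
positive probability, but they turn into chain rules valid everywhere, since an event contained
in a null event is null. These give `ℙ(X_{≤k} = (x, 1), Z_{≤k} = (z, 1)) = A · p · q / p = A · q`
(when `p = 0` and `A > 0`, domination forces `q = 0`), while `Z_k = 1` has probability `0` given
`X_k = 0`; the latter is `Z ⊆ X`. Summing out `X_k` shows that, jointly with any `X`-prefix,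
`Z_k` is drawn from the conditional law of `Y_k` given `Y_{<k} = z`; summing over the
`X`-prefix and inducting on `k`, the prefix probabilities of `Z` and `Y` agree.
-/

/-- `ℙ(W_{1:k} = x_{1:k})`: probability that a point process with distribution `P`
(identified with a `{0,1}^N`-valued vector) agrees with `x` on the first `k` coordinates. -/
noncomputable def prefProb {N : ℕ} (P : (Fin N → Bool) → ℝ) (k : ℕ) (x : Fin N → Bool) : ℝ :=
  ∑ w : Fin N → Bool, if ∀ i : Fin N, (i : ℕ) < k → w i = x i then P w else 0

/-- `ℙ(W_k = 1 | W_{1:k−1} = x_{1:k−1})` for a point process with distribution `P`. -/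
noncomputable def condProb {N : ℕ} (P : (Fin N → Bool) → ℝ) (k : Fin N) (x : Fin N → Bool) : ℝ :=
  (∑ w : Fin N → Bool,
      if (∀ i : Fin N, (i : ℕ) < (k : ℕ) → w i = x i) ∧ w k = true then P w else 0) /
    prefProb P (k : ℕ) x

/-- `ℙ(X_{1:kX} = x_{1:kX}, Z_{1:kZ} = z_{1:kZ})` under a coupling `μ` of `(X, Z)`. -/
noncomputable def prefProb2 {N : ℕ} (μ : ((Fin N → Bool) × (Fin N → Bool)) → ℝ)
    (kX kZ : ℕ) (x z : Fin N → Bool) : ℝ :=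
  ∑ p : (Fin N → Bool) × (Fin N → Bool),
    if (∀ i : Fin N, (i : ℕ) < kX → p.1 i = x i) ∧ (∀ i : Fin N, (i : ℕ) < kZ → p.2 i = z i)
      then μ p else 0

/-- `ℙ(X_k = 1 | Z_{1:k−1} = z_{1:k−1}, X_{1:k−1} = x_{1:k−1})` under the coupling `μ`. -/
noncomputable def condProbX {N : ℕ} (μ : ((Fin N → Bool) × (Fin N → Bool)) → ℝ)
    (k : Fin N) (x z : Fin N → Bool) : ℝ :=
  (∑ p : (Fin N → Bool) × (Fin N → Bool),
      if (∀ i : Fin N, (i : ℕ) < (k : ℕ) → p.1 i = x i) ∧ p.1 k = true ∧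
          (∀ i : Fin N, (i : ℕ) < (k : ℕ) → p.2 i = z i)
        then μ p else 0) /
    prefProb2 μ (k : ℕ) (k : ℕ) x z

/-- `ℙ(Z_k = 1 | Z_{1:k−1} = z_{1:k−1}, X_{1:k} = x_{1:k})` under the coupling `μ`. -/
noncomputable def condProbZ {N : ℕ} (μ : ((Fin N → Bool) × (Fin N → Bool)) → ℝ)
    (k : Fin N) (x z : Fin N → Bool) : ℝ :=
  (∑ p : (Fin N → Bool) × (Fin N → Bool),
      if (∀ i : Fin N, (i : ℕ) < (k : ℕ) + 1 → p.1 i = x i) ∧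
          (∀ i : Fin N, (i : ℕ) < (k : ℕ) → p.2 i = z i) ∧ p.2 k = true
        then μ p else 0) /
    prefProb2 μ ((k : ℕ) + 1) (k : ℕ) x z

open Finset Function

section Update
variable {N : ℕ} {β : Type*}

lemma forall_lt_succ_eq_update_iff (k : Fin N) (x w : Fin N → β) (b : β) :
    (∀ i : Fin N, (i : ℕ) < k + 1 → w i = update x k b i) ↔
      (∀ i : Fin N, (i : ℕ) < k → w i = x i) ∧ w k = b := by
  refine ⟨fun h => ⟨fun i hi => ?_, by simpa using h k (by omega)⟩, fun ⟨h, hk⟩ i hi => ?_⟩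
  · simpa [update_of_ne (Fin.ne_of_val_ne hi.ne)] using h i (by omega)
  · rcases (Nat.lt_succ_iff_lt_or_eq.mp hi) with hi | hi
    · simpa [update_of_ne (Fin.ne_of_val_ne hi.ne)] using h i hi
    · obtain rfl : i = k := Fin.ext hi
      simpa using hk

lemma forall_lt_eq_update_iff (k : Fin N) (x w : Fin N → β) (b : β) :
    (∀ i : Fin N, (i : ℕ) < k → w i = update x k b i) ↔
      ∀ i : Fin N, (i : ℕ) < k → w i = x i :=
  forall₂_congr fun i hi => by rw [update_of_ne (Fin.ne_of_val_ne hi.ne)]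

lemma sum_update_true_add_update_false {M : Type*} [AddCommMonoid M]
    (h : (Fin N → Bool) → M) (k : Fin N) :
    ∑ x, (h (update x k true) + h (update x k false)) = 2 • ∑ x, h x := by
  set flip : (Fin N → Bool) → (Fin N → Bool) := fun x => update x k (!x k)
  have hflip : Involutive flip := fun x => by simp [flip]
  have hpair : ∀ x, h (update x k true) + h (update x k false) = h x + h (flip x) := by
    intro x
    have hx := update_eq_self k x
    cases hb : x k <;> rw [hb] at hx <;> simp [flip, hb, hx, add_comm]
  rw [sum_congr rfl fun x _ => hpair x, sum_add_distrib, two_nsmul,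
    show ∑ x, h (flip x) = ∑ x, h x from Equiv.sum_comp (hflip.toPerm flip) h]

end Update

section PrefProb
variable {N : ℕ} (P : (Fin N → Bool) → ℝ)

lemma prefProb_nonneg (hP : ∀ w, 0 ≤ P w) (k : ℕ) (x : Fin N → Bool) : 0 ≤ prefProb P k x :=
  sum_nonneg fun w _ => by split_ifs <;> simp [hP w]

lemma prefProb_succ_update_true_add (k : Fin N) (x : Fin N → Bool) :
    prefProb P (k + 1) (update x k true) + prefProb P (k + 1) (update x k false) =
      prefProb P k x := by
  simp only [prefProb, ← sum_add_distrib, forall_lt_succ_eq_update_iff]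
  refine sum_congr rfl fun w _ => ?_
  cases w k <;> simp

lemma condProb_eq_div (k : Fin N) (x : Fin N → Bool) :
    condProb P k x = prefProb P (k + 1) (update x k true) / prefProb P k x := by
  simp only [condProb, prefProb, forall_lt_succ_eq_update_iff]

lemma prefProb_succ_update_true (hP : ∀ w, 0 ≤ P w) (k : Fin N) (x : Fin N → Bool) :
    prefProb P (k + 1) (update x k true) = prefProb P k x * condProb P k x := by
  rw [condProb_eq_div]
  rcases (prefProb_nonneg P hP k x).eq_or_lt with h0 | hpos
  · have hsplit := prefProb_succ_update_true_add P k x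
    rw [← h0, zero_mul]
    linarith [prefProb_nonneg P hP (k + 1) (update x k true),
      prefProb_nonneg P hP (k + 1) (update x k false)]
  · field_simp

lemma prefProb_succ (hP : ∀ w, 0 ≤ P w) (k : Fin N) (x : Fin N → Bool) :
    prefProb P (k + 1) x =
      prefProb P k x * if x k then condProb P k x else 1 - condProb P k x := by
  have htrue := prefProb_succ_update_true P hP k x
  have hsplit := prefProb_succ_update_true_add P k x
  conv_lhs => rw [← update_eq_self k x]
  cases x k
  · simp only [Bool.false_eq_true, if_false]
    linarith
  · simpa using htrue

lemma condProb_nonneg (hP : ∀ w, 0 ≤ P w) (k : Fin N) (x : Fin N → Bool) :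
    0 ≤ condProb P k x := by
  rw [condProb_eq_div]
  exact div_nonneg (prefProb_nonneg P hP _ _) (prefProb_nonneg P hP _ _)

lemma condProb_update (k : Fin N) (x : Fin N → Bool) (b : Bool) :
    condProb P k (update x k b) = condProb P k x := by
  simp only [condProb, prefProb, forall_lt_eq_update_iff]

lemma prefProb_zero (x : Fin N → Bool) : prefProb P 0 x = ∑ w, P w := by
  simp [prefProb]

lemma prefProb_self (x : Fin N → Bool) : prefProb P N x = P x := by
  simp [prefProb, ← funext_iff]

end PrefProb

section PrefProb2
variable {N : ℕ} (μ : ((Fin N → Bool) × (Fin N → Bool)) → ℝ)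

lemma prefProb2_nonneg (hμ : ∀ p, 0 ≤ μ p) (kX kZ : ℕ) (x z : Fin N → Bool) :
    0 ≤ prefProb2 μ kX kZ x z :=
  sum_nonneg fun p _ => by split_ifs <;> simp [hμ p]

lemma le_prefProb2 (hμ : ∀ p, 0 ≤ μ p) (kX kZ : ℕ) (p : (Fin N → Bool) × (Fin N → Bool)) :
    μ p ≤ prefProb2 μ kX kZ p.1 p.2 := by
  refine le_of_eq_of_le ?_ (single_le_sum (fun q _ => ?_) (mem_univ p))
  · simp
  · split_ifs <;> simp [hμ q]

lemma prefProb2_succ_update_true_add_left (k : Fin N) (kZ : ℕ) (x z : Fin N → Bool) :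
    prefProb2 μ (k + 1) kZ (update x k true) z + prefProb2 μ (k + 1) kZ (update x k false) z =
      prefProb2 μ k kZ x z := by
  simp only [prefProb2, ← sum_add_distrib, forall_lt_succ_eq_update_iff]
  refine sum_congr rfl fun p _ => ?_
  cases p.1 k <;> simp

lemma prefProb2_succ_update_true_add_right (kX : ℕ) (k : Fin N) (x z : Fin N → Bool) :
    prefProb2 μ kX (k + 1) x (update z k true) + prefProb2 μ kX (k + 1) x (update z k false) =
      prefProb2 μ kX k x z := by
  simp only [prefProb2, ← sum_add_distrib, forall_lt_succ_eq_update_iff]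
  refine sum_congr rfl fun p _ => ?_
  cases p.2 k <;> simp

lemma condProbX_eq_div (k : Fin N) (x z : Fin N → Bool) :
    condProbX μ k x z = prefProb2 μ (k + 1) k (update x k true) z / prefProb2 μ k k x z := by
  simp only [condProbX, prefProb2, forall_lt_succ_eq_update_iff, and_assoc]

lemma condProbZ_eq_div (k : Fin N) (x z : Fin N → Bool) :
    condProbZ μ k x z =
      prefProb2 μ (k + 1) (k + 1) x (update z k true) / prefProb2 μ (k + 1) k x z := by
  simp only [condProbZ, prefProb2, forall_lt_succ_eq_update_iff]

lemma prefProb2_zero_zero (x z : Fin N → Bool) : prefProb2 μ 0 0 x z = ∑ p, μ p := by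
  simp [prefProb2]

lemma prefProb2_self_self (x z : Fin N → Bool) : prefProb2 μ N N x z = μ (x, z) := by
  have hpt : ∀ p : (Fin N → Bool) × (Fin N → Bool), p.1 = x ∧ p.2 = z ↔ p = (x, z) :=
    fun p => (Prod.ext_iff (y := (x, z))).symm
  simp [prefProb2, ← funext_iff, hpt]

end PrefProb2

lemma eq_mul_of_le_of_div_eq {n d c : ℝ} (h : 0 < d → n / d = c) (hn : 0 ≤ n) (hnd : n ≤ d) :
    n = d * c := by
  rcases (hn.trans hnd).eq_or_lt with hd | hd
  · rw [← hd] at hnd ⊢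
    rw [zero_mul]
    exact le_antisymm hnd hn
  · rw [← h hd, mul_div_cancel₀ _ hd.ne']

section ThinningCoupling
variable {N : ℕ} {PX PY : (Fin N → Bool) → ℝ} {μ : ((Fin N → Bool) × (Fin N → Bool)) → ℝ}
  (hPY : ∀ y, 0 ≤ PY y) (hμ : ∀ p, 0 ≤ μ p)
  (hdom : ∀ (k : Fin N) (x z : Fin N → Bool),
    0 < prefProb2 μ (k : ℕ) (k : ℕ) x z → condProb PY k z ≤ condProb PX k x)
  (hX : ∀ (k : Fin N) (x z : Fin N → Bool),
    0 < prefProb2 μ (k : ℕ) (k : ℕ) x z → condProbX μ k x z = condProb PX k x)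
  (hZ : ∀ (k : Fin N) (x z : Fin N → Bool),
    0 < prefProb2 μ ((k : ℕ) + 1) (k : ℕ) x z →
      condProbZ μ k x z = if x k = true then condProb PY k z / condProb PX k x else 0)

include hμ hX in
lemma prefProb2_succ_update_true_left (k : Fin N) (x z : Fin N → Bool) :
    prefProb2 μ (k + 1) k (update x k true) z = prefProb2 μ k k x z * condProb PX k x := by
  refine eq_mul_of_le_of_div_eq (fun hA => ?_) (prefProb2_nonneg μ hμ _ _ _ _) ?_
  · rw [← condProbX_eq_div]
    exact hX k x z hA
  · rw [← prefProb2_succ_update_true_add_left μ k k x z]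
    exact le_add_of_nonneg_right (prefProb2_nonneg μ hμ _ _ _ _)

include hμ hZ in
lemma prefProb2_succ_update_true_right (k : Fin N) (x z : Fin N → Bool) :
    prefProb2 μ (k + 1) (k + 1) x (update z k true) =
      prefProb2 μ (k + 1) k x z * if x k then condProb PY k z / condProb PX k x else 0 := by
  refine eq_mul_of_le_of_div_eq (fun hB => ?_) (prefProb2_nonneg μ hμ _ _ _ _) ?_
  · rw [← condProbZ_eq_div]
    exact hZ k x z hB
  · rw [← prefProb2_succ_update_true_add_right μ (k + 1) k x z]
    exact le_add_of_nonneg_right (prefProb2_nonneg μ hμ _ _ _ _)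

include hμ hZ in
lemma fst_eq_true_of_snd_eq_true {p : (Fin N → Bool) × (Fin N → Bool)} (hp : 0 < μ p)
    {k : Fin N} (hk : p.2 k = true) : p.1 k = true := by
  by_contra hfalse
  have h := prefProb2_succ_update_true_right hμ hZ k p.1 p.2
  rw [update_eq_self_iff.mpr hk.symm, if_neg hfalse, mul_zero] at h
  exact hp.not_ge (h ▸ le_prefProb2 μ hμ _ _ p)

include hPY hμ hdom hX hZ in
lemma prefProb2_succ_marginal_update_true (k : Fin N) (x z : Fin N → Bool) :
    prefProb2 μ (k + 1) (k + 1) (update x k true) (update z k true) +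
        prefProb2 μ (k + 1) (k + 1) (update x k false) (update z k true) =
      prefProb2 μ k k x z * condProb PY k z := by
  simp only [prefProb2_succ_update_true_right hμ hZ, prefProb2_succ_update_true_left hμ hX,
    update_self, condProb_update, if_true, Bool.false_eq_true, if_false, mul_zero, add_zero]
  rcases eq_or_ne (condProb PX k x) 0 with hqX | hqX
  · suffices prefProb2 μ k k x z * condProb PY k z = 0 by simp [hqX, this]
    rcases (prefProb2_nonneg μ hμ k k x z).eq_or_lt with hA | hA
    · rw [← hA, zero_mul]
    · rw [le_antisymm (hqX ▸ hdom k x z hA) (condProb_nonneg PY hPY k z), mul_zero]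
  · field_simp

include hPY hμ hdom hX hZ in
lemma prefProb2_succ_marginal (k : Fin N) (x z : Fin N → Bool) :
    prefProb2 μ (k + 1) (k + 1) (update x k true) z +
        prefProb2 μ (k + 1) (k + 1) (update x k false) z =
      prefProb2 μ k k x z * if z k then condProb PY k z else 1 - condProb PY k z := by
  have htrue := prefProb2_succ_marginal_update_true hPY hμ hdom hX hZ k x z
  have hsplit := prefProb2_succ_update_true_add_left μ k k x z
  have hsplit_true := prefProb2_succ_update_true_add_right μ (k + 1) k (update x k true) z
  have hsplit_false := prefProb2_succ_update_true_add_right μ (k + 1) k (update x k false) z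
  conv_lhs => rw [← update_eq_self k z]
  cases z k
  · simp only [Bool.false_eq_true, if_false]
    linarith
  · simpa using htrue

-- Summing over all `x : Fin N → Bool` counts every prefix `x_{<k}` exactly `2 ^ (N - k)` times.
include hPY hμ hdom hX hZ in
lemma sum_prefProb2_eq_two_pow_mul_prefProb (hPYsum : ∑ y, PY y = 1) (hμsum : ∑ p, μ p = 1) :
    ∀ k ≤ N, ∀ z, ∑ x, prefProb2 μ k k x z = 2 ^ (N - k) * prefProb PY k z := by
  intro k
  induction k with
  | zero => simp [prefProb2_zero_zero, prefProb_zero, hPYsum, hμsum]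
  | succ k ih =>
    intro hk z
    set κ : Fin N := ⟨k, hk⟩
    have hstep : ∀ x, prefProb2 μ (k + 1) (k + 1) (update x κ true) z +
          prefProb2 μ (k + 1) (k + 1) (update x κ false) z =
        prefProb2 μ k k x z * if z κ then condProb PY κ z else 1 - condProb PY κ z :=
      fun x => prefProb2_succ_marginal hPY hμ hdom hX hZ κ x z
    have hdouble := sum_update_true_add_update_false (fun x => prefProb2 μ (k + 1) (k + 1) x z) κ
    rw [sum_congr rfl fun x _ => hstep x, ← sum_mul, ih (Nat.le_of_succ_le hk) z,
      nsmul_eq_mul, Nat.cast_ofNat] at hdouble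
    have hpow : (2 : ℝ) ^ (N - k) = 2 * 2 ^ (N - (k + 1)) := by
      rw [← pow_succ', Nat.sub_add_eq, Nat.sub_add_cancel (Nat.sub_pos_of_lt hk)]
    have hfactor : prefProb PY (k + 1) z =
        prefProb PY k z * if z κ then condProb PY κ z else 1 - condProb PY κ z :=
      prefProb_succ PY hPY κ z
    rw [hfactor]
    rw [hpow] at hdouble
    linarith

end ThinningCoupling

theorem sequential_thinning_general {N : ℕ}
    (PX PY : (Fin N → Bool) → ℝ) (μ : ((Fin N → Bool) × (Fin N → Bool)) → ℝ)
    (hPYnn : ∀ y, 0 ≤ PY y) (hμnn : ∀ p, 0 ≤ μ p)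
    (hPYsum : ∑ y, PY y = 1) (hμsum : ∑ p, μ p = 1)
    -- domination: whenever `ℙ(Z_{1:k−1} = z_{1:k−1}, X_{1:k−1} = x_{1:k−1}) > 0`,
    -- `ℙ(Y_k = 1 | Y_{1:k−1} = z_{1:k−1}) ≤ ℙ(X_k = 1 | X_{1:k−1} = x_{1:k−1})`
    (hdom : ∀ (k : Fin N) (x z : Fin N → Bool),
      0 < prefProb2 μ (k : ℕ) (k : ℕ) x z → condProb PY k z ≤ condProb PX k x)
    -- the coupling conditional for `X_k`
    (hX : ∀ (k : Fin N) (x z : Fin N → Bool),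
      0 < prefProb2 μ (k : ℕ) (k : ℕ) x z → condProbX μ k x z = condProb PX k x)
    -- the coupling conditional for `Z_k`
    (hZ : ∀ (k : Fin N) (x z : Fin N → Bool),
      0 < prefProb2 μ ((k : ℕ) + 1) (k : ℕ) x z →
        condProbZ μ k x z =
          if x k = true then condProb PY k z / condProb PX k x else 0) :
    (∀ p : (Fin N → Bool) × (Fin N → Bool), 0 < μ p →
        ∀ k : Fin N, p.2 k = true → p.1 k = true) ∧
    (∀ z : Fin N → Bool, ∑ x : Fin N → Bool, μ (x, z) = PY z) := by
  refine ⟨fun p hp k hk => fst_eq_true_of_snd_eq_true hμnn hZ hp hk, fun z => ?_⟩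
  have hmarginal := sum_prefProb2_eq_two_pow_mul_prefProb hPYnn hμnn hdom hX hZ hPYsum hμsum N le_rfl z
  simpa only [prefProb2_self_self, prefProb_self, Nat.sub_self, pow_zero, one_mul] using hmarginal

/-- Sequential thinning: if `Y` is dominated by `X` in the sequential conditional sense
and `(X, Z)` is the coupling defined by the sequential thinning conditionals, then
`Z ⊆ X` almost surely and `Z` has the same distribution as `Y`. -/
theorem sequential_thinning {N : ℕ}
    (PX PY : (Fin N → Bool) → ℝ) (μ : ((Fin N → Bool) × (Fin N → Bool)) → ℝ)
    (hPXnn : ∀ x, 0 ≤ PX x) (hPYnn : ∀ y, 0 ≤ PY y) (hμnn : ∀ p, 0 ≤ μ p)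
    (hPXsum : ∑ x, PX x = 1) (hPYsum : ∑ y, PY y = 1) (hμsum : ∑ p, μ p = 1)
    -- domination: whenever `ℙ(Z_{1:k−1} = z_{1:k−1}, X_{1:k−1} = x_{1:k−1}) > 0`,
    -- `ℙ(Y_k = 1 | Y_{1:k−1} = z_{1:k−1}) ≤ ℙ(X_k = 1 | X_{1:k−1} = x_{1:k−1})`
    (hdom : ∀ (k : Fin N) (x z : Fin N → Bool),
      0 < prefProb2 μ (k : ℕ) (k : ℕ) x z → condProb PY k z ≤ condProb PX k x)
    -- the coupling conditional for `X_k`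
    (hX : ∀ (k : Fin N) (x z : Fin N → Bool),
      0 < prefProb2 μ (k : ℕ) (k : ℕ) x z → condProbX μ k x z = condProb PX k x)
    -- the coupling conditional for `Z_k`
    (hZ : ∀ (k : Fin N) (x z : Fin N → Bool),
      0 < prefProb2 μ ((k : ℕ) + 1) (k : ℕ) x z →
        condProbZ μ k x z =
          if x k = true then condProb PY k z / condProb PX k x else 0) :
    (∀ p : (Fin N → Bool) × (Fin N → Bool), 0 < μ p →
        ∀ k : Fin N, p.2 k = true → p.1 k = true) ∧
    (∀ z : Fin N → Bool, ∑ x : Fin N → Bool, μ (x, z) = PY z) :=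
  sequential_thinning_general PX PY μ hPYnn hμnn hPYsum hμsum hdom hX hZ
end
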